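/- The order of the Weyl group is given by |W| = ∏_{α∈R⁺} (⟨ρ,α∨⟩ + 1 + (1/2)δ_{α/2}) / (⟨ρ,α∨⟩ + (1/2)δ_{α/2}), where δ_{α/2} = 1 if α/2 ∈ R and δ_{α/2} = 0 otherwise (the root system R is allowed to be nonreduced). -/

import Mathlib

open scoped RealInnerProductSpace

noncomputable section

variable {E : Type*} [NormedAddCommGroup E] [InnerProductSpace ℝ E]

/-- The coroot pairing `⟨x, α∨⟩ = 2⟨x,α⟩/⟨α,α⟩`. -/
def copair (α x : E) : ℝ := 2 * ⟪x, α⟫ / ⟪α, α⟫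

/-- The orthogonal reflection `r_α(x) = x - ⟨x,α∨⟩α`. -/
def reflRoot (α x : E) : E := x - copair α x • α

/-- The set of reflections in the roots of `R`, as linear automorphisms. -/
def reflections (R : Finset E) : Set (E ≃ₗ[ℝ] E) :=
  {g | ∃ α ∈ R, ∀ x, g x = reflRoot α x}

/-- The Weyl group of `R`. -/
def weylGroup (R : Finset E) : Subgroup (E ≃ₗ[ℝ] E) :=
  Subgroup.closure (reflections R)

/-- Membership in the weight lattice `P`. -/
def IsWeight (R : Finset E) (x : E) : Prop :=
  ∀ α ∈ R, ∃ z : ℤ, copair α x = (z : ℝ)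

/-- The Weyl orbit `W(x)` as a finset. -/
def weylOrbit [DecidableEq E] (R : Finset E) [Fintype (weylGroup R)] (x : E) : Finset E :=
  Finset.image (fun w : weylGroup R => (w : E ≃ₗ[ℝ] E) x) Finset.univ

set_option linter.unusedSectionVars false
set_option maxHeartbeats 1000000
section Development
variable {E : Type*} [NormedAddCommGroup E] [InnerProductSpace ℝ E] [DecidableEq E]

private lemma ipos {α : E} (h : α ≠ 0) : 0 < ⟪α, α⟫ := by
  have h2 : ‖α‖ ≠ 0 := norm_ne_zero_iff.mpr h
  rw [real_inner_self_eq_norm_sq]; positivity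

private lemma ine {α : E} (h : α ≠ 0) : ⟪α, α⟫ ≠ 0 := ne_of_gt (ipos h)

lemma copair_add (α x y : E) : copair α (x + y) = copair α x + copair α y := by
  unfold copair; rw [inner_add_left]; ring

lemma copair_smul (α : E) (c : ℝ) (x : E) : copair α (c • x) = c * copair α x := by
  unfold copair; rw [real_inner_smul_left]; ring

lemma copair_neg_right (α x : E) : copair α (-x) = - copair α x := by
  unfold copair; rw [inner_neg_left]; ring

lemma copair_sub (α x y : E) : copair α (x - y) = copair α x - copair α y := by
  rw [sub_eq_add_neg, copair_add, copair_neg_right]; ring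

lemma copair_neg (α x : E) : copair (-α) x = - copair α x := by
  unfold copair; rw [inner_neg_right, inner_neg_neg]; ring

lemma copair_self {α : E} (h : α ≠ 0) : copair α α = 2 := by
  unfold copair; rw [mul_div_assoc, div_self (ine h), mul_one]

lemma copair_smul_root {α : E} (c : ℝ) (hc : c ≠ 0) (x : E) :
    copair (c • α) x = copair α x / c := by
  rcases eq_or_ne α 0 with h | h
  · simp [copair, h]
  · unfold copair
    rw [real_inner_smul_right, real_inner_smul_left, real_inner_smul_right]
    field_simp [ine h]

lemma reflRoot_add (α x y : E) : reflRoot α (x + y) = reflRoot α x + reflRoot α y := by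
  unfold reflRoot; rw [copair_add, add_smul]; abel

lemma reflRoot_smulx (α : E) (c : ℝ) (x : E) : reflRoot α (c • x) = c • reflRoot α x := by
  unfold reflRoot; rw [copair_smul, smul_sub, mul_smul]

lemma copair_smul_self (α : E) (a : ℝ) : copair α (a • α) = a * copair α α := copair_smul _ _ _

lemma reflRoot_invol {α : E} (h : α ≠ 0) : Function.Involutive (reflRoot α) := by
  intro x
  show (x - copair α x • α) - copair α (x - copair α x • α) • α = x
  rw [copair_sub, copair_smul_self, copair_self h]
  module

def reflLM (α : E) : E →ₗ[ℝ] E :=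
  { toFun := reflRoot α
    map_add' := reflRoot_add α
    map_smul' := reflRoot_smulx α }

noncomputable def rflE (α : E) : E ≃ₗ[ℝ] E :=
  if h : α = 0 then LinearEquiv.refl ℝ E
  else LinearEquiv.ofInvolutive (reflLM α) (reflRoot_invol h)

lemma rflE_apply {α : E} (h : α ≠ 0) (x : E) : rflE α x = reflRoot α x := by
  unfold rflE; rw [dif_neg h]; rfl

lemma rflE_smul_root {α : E} (hα : α ≠ 0) (c : ℝ) (hc : c ≠ 0) :
    rflE (c • α) = rflE α := by
  have hca : c • α ≠ 0 := smul_ne_zero hc hα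
  apply LinearEquiv.toLinearMap_injective
  apply LinearMap.ext
  intro x
  show rflE (c • α) x = rflE α x
  rw [rflE_apply hca, rflE_apply hα]
  unfold reflRoot
  rw [copair_smul_root c hc, smul_smul, div_mul_cancel₀ _ hc]

lemma rflE_neg {α : E} (hα : α ≠ 0) : rflE (-α) = rflE α := by
  have := rflE_smul_root hα (-1) (by norm_num)
  simpa using this

lemma rflE_invol {α : E} (hα : α ≠ 0) : ∀ x, rflE α (rflE α x) = x := by
  intro x; rw [rflE_apply hα, rflE_apply hα]; exact reflRoot_invol hα x

lemma rflE_symm {α : E} (hα : α ≠ 0) : (rflE α).symm = rflE α := by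
  apply LinearEquiv.toLinearMap_injective
  apply LinearMap.ext
  intro x
  show (rflE α).symm x = rflE α x
  rw [LinearEquiv.symm_apply_eq]
  exact (rflE_invol hα _).symm

lemma rflE_inv {α : E} (hα : α ≠ 0) : (rflE α)⁻¹ = rflE α := by
  apply LinearEquiv.toLinearMap_injective
  apply LinearMap.ext
  intro x
  show (rflE α).symm x = rflE α x
  rw [LinearEquiv.symm_apply_eq]
  exact (rflE_invol hα _).symm

end Development
section Dev2
variable {E : Type*} [NormedAddCommGroup E] [InnerProductSpace ℝ E] [DecidableEq E]

structure RSys (E : Type*) [NormedAddCommGroup E] [InnerProductSpace ℝ E] where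
  R : Finset E
  Rp : Finset E
  f : E →ₗ[ℝ] ℝ
  h0 : (0 : E) ∉ R
  hcrys : ∀ α ∈ R, ∀ β ∈ R, ∃ z : ℤ, copair α β = (z : ℝ)
  hrc : ∀ α ∈ R, ∀ β ∈ R, reflRoot α β ∈ R
  hf : ∀ α ∈ R, f α ≠ 0
  hRp : ∀ α, α ∈ Rp ↔ α ∈ R ∧ 0 < f α

namespace RSys

variable (S : RSys E)

lemma ne0 {α : E} (h : α ∈ S.R) : α ≠ 0 := fun e => S.h0 (e ▸ h)

lemma RpR {α : E} (h : α ∈ S.Rp) : α ∈ S.R := ((S.hRp α).1 h).1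

lemma Rpf {α : E} (h : α ∈ S.Rp) : 0 < S.f α := ((S.hRp α).1 h).2

lemma mem_Rp {α : E} (hα : α ∈ S.R) (hp : 0 < S.f α) : α ∈ S.Rp := (S.hRp α).2 ⟨hα, hp⟩

lemma neg_mem {α : E} (h : α ∈ S.R) : -α ∈ S.R := by
  have h2 := S.hrc α h α h
  have e : reflRoot α α = -α := by
    unfold reflRoot; rw [copair_self (S.ne0 h)]; module
  rwa [e] at h2

lemma pos_or_neg {α : E} (h : α ∈ S.R) : α ∈ S.Rp ∨ -α ∈ S.Rp := by
  rcases lt_or_gt_of_ne (S.hf α h) with hneg | hpos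
  · right
    exact S.mem_Rp (S.neg_mem h) (by rw [map_neg]; linarith)
  · left; exact S.mem_Rp h hpos

lemma neg_not_Rp {α : E} (h : α ∈ S.Rp) : -α ∉ S.Rp := by
  intro h2
  have := S.Rpf h2
  rw [map_neg] at this
  have := S.Rpf h
  linarith

/-- the "good" predicate: preserves the inner product and `R` in both directions -/
def IsGood (g : E ≃ₗ[ℝ] E) : Prop :=
  (∀ x y : E, ⟪g x, g y⟫ = ⟪x, y⟫) ∧ (∀ α ∈ S.R, g α ∈ S.R) ∧ (∀ α ∈ S.R, g.symm α ∈ S.R)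

lemma reflRoot_isom {α : E} (hα : α ≠ 0) (x y : E) :
    ⟪reflRoot α x, reflRoot α y⟫ = ⟪x, y⟫ := by
  unfold reflRoot copair
  have hne := ine hα
  simp only [inner_sub_left, inner_sub_right, real_inner_smul_left, real_inner_smul_right]
  rw [real_inner_comm α y, real_inner_comm α x]
  field_simp
  ring

lemma good_rflE {α : E} (hα : α ∈ S.R) : S.IsGood (rflE α) := by
  have h0 := S.ne0 hα
  refine ⟨?_, ?_, ?_⟩
  · intro x y; rw [rflE_apply h0, rflE_apply h0]; exact reflRoot_isom h0 x y
  · intro β hβ; rw [rflE_apply h0]; exact S.hrc α hα β hβ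
  · intro β hβ
    rw [rflE_symm h0, rflE_apply h0]; exact S.hrc α hα β hβ

lemma good_one : S.IsGood 1 := by
  refine ⟨fun x y => rfl, fun α h => h, fun α h => h⟩

lemma good_mul {g h : E ≃ₗ[ℝ] E} (hg : S.IsGood g) (hh : S.IsGood h) :
    S.IsGood (g * h) := by
  refine ⟨fun x y => ?_, fun α hα => ?_, fun α hα => ?_⟩
  · show ⟪g (h x), g (h y)⟫ = ⟪x, y⟫
    rw [hg.1, hh.1]
  · exact hg.2.1 _ (hh.2.1 α hα)
  · have : (g * h).symm α = h.symm (g.symm α) := rfl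
    rw [this]
    exact hh.2.2 _ (hg.2.2 α hα)

lemma good_inv {g : E ≃ₗ[ℝ] E} (hg : S.IsGood g) : S.IsGood g⁻¹ := by
  refine ⟨fun x y => ?_, fun α hα => hg.2.2 α hα, fun α hα => ?_⟩
  · show ⟪g.symm x, g.symm y⟫ = ⟪x, y⟫
    rw [← hg.1 (g.symm x) (g.symm y), g.apply_symm_apply, g.apply_symm_apply]
  · show (g.symm).symm α ∈ S.R
    rw [g.symm_symm]
    exact hg.2.1 α hα

lemma good_mem {g : E ≃ₗ[ℝ] E} (hg : g ∈ weylGroup S.R) : S.IsGood g := by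
  induction hg using Subgroup.closure_induction with
  | mem x hx =>
      obtain ⟨α, hα, he⟩ := hx
      have : x = rflE α := by
        apply LinearEquiv.toLinearMap_injective; apply LinearMap.ext; intro y
        show x y = rflE α y
        rw [he y, rflE_apply (S.ne0 hα)]
      rw [this]; exact S.good_rflE hα
  | one => exact S.good_one
  | mul x y _ _ gx gy => exact S.good_mul gx gy
  | inv x _ gx => exact S.good_inv gx

end RSys
end Dev2
section Dev3
variable {E : Type*} [NormedAddCommGroup E] [InnerProductSpace ℝ E] [DecidableEq E]
namespace RSys
variable (S : RSys E)

lemma ratio {α β : E} (hα : α ∈ S.R) (hβ : β ∈ S.R) {c : ℝ} (hc : β = c • α) :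
    c = 1 ∨ c = -1 ∨ c = 2 ∨ c = -2 ∨ c = 2⁻¹ ∨ c = -2⁻¹ := by
  have hα0 := S.ne0 hα
  have hc0 : c ≠ 0 := by
    intro h; rw [h, zero_smul] at hc; exact S.ne0 hβ hc
  obtain ⟨p, hp⟩ := S.hcrys α hα β hβ
  obtain ⟨q, hq⟩ := S.hcrys β hβ α hα
  have e1 : copair α β = 2 * c := by
    rw [hc, copair_smul_self, copair_self hα0]; ring
  have e2 : copair β α = 2 / c := by
    rw [hc, copair_smul_root c hc0, copair_self hα0]
  have hpq : (p : ℝ) * (q : ℝ) = 4 := by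
    rw [← hp, ← hq, e1, e2]; field_simp; ring
  have hpq' : p * q = 4 := by exact_mod_cast hpq
  have hpne : p ≠ 0 := by
    intro h; rw [h] at hpq'; omega
  have hd : p ∣ 4 := ⟨q, hpq'.symm⟩
  have hb1 : p ≤ 4 := Int.le_of_dvd (by norm_num) hd
  have hb2 : -4 ≤ p := by
    have := Int.le_of_dvd (show (0:ℤ) < 4 by norm_num) ((neg_dvd).mpr hd)
    linarith
  have h2c : 2 * c = (p : ℝ) := by rw [← e1, hp]
  interval_cases p <;> first
    | omega
    | (norm_num at h2c; first
        | (left; linarith)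
        | (right; left; linarith)
        | (right; right; left; linarith)
        | (right; right; right; left; linarith)
        | (right; right; right; right; left; linarith)
        | (right; right; right; right; right; linarith))

lemma strictCS {x y : E} (hy : y ≠ 0) (hnp : ∀ c : ℝ, x ≠ c • y) :
    ⟪x, y⟫ ^ 2 < ⟪x, x⟫ * ⟪y, y⟫ := by
  set c : ℝ := ⟪x, y⟫ / ⟪y, y⟫ with hcdef
  have hv : x - c • y ≠ 0 := by
    intro h
    exact hnp c (by rw [← sub_eq_zero]; exact h)
  have h1 : 0 < ⟪x - c • y, x - c • y⟫ := ipos hv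
  have expand : ⟪x - c • y, x - c • y⟫ = ⟪x, x⟫ - 2 * c * ⟪x, y⟫ + c ^ 2 * ⟪y, y⟫ := by
    simp only [inner_sub_left, inner_sub_right, real_inner_smul_left, real_inner_smul_right]
    rw [real_inner_comm y x]
    ring
  rw [expand] at h1
  have hyy := ipos hy
  have hc2 : c ^ 2 * ⟪y, y⟫ = ⟪x, y⟫ ^ 2 / ⟪y, y⟫ := by
    rw [hcdef]; field_simp
  have hc1 : 2 * c * ⟪x, y⟫ = 2 * (⟪x, y⟫ ^ 2 / ⟪y, y⟫) := by
    rw [hcdef]; field_simp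
  rw [hc1, hc2] at h1
  have h2 : ⟪x, y⟫ ^ 2 / ⟪y, y⟫ < ⟪x, x⟫ := by linarith
  calc ⟪x, y⟫ ^ 2 = (⟪x, y⟫ ^ 2 / ⟪y, y⟫) * ⟪y, y⟫ := by field_simp
    _ < ⟪x, x⟫ * ⟪y, y⟫ := by
        exact mul_lt_mul_of_pos_right h2 hyy

lemma diff_mem {α β : E} (hα : α ∈ S.R) (hβ : β ∈ S.R) (hip : 0 < ⟪α, β⟫)
    (hne : α ≠ β) : α - β ∈ S.R := by
  by_cases hprop : ∃ c : ℝ, β = c • α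
  · obtain ⟨c, hc⟩ := hprop
    have hcpos : 0 < c := by
      have h2 : 0 < c * ⟪α, α⟫ := by
        rw [hc, real_inner_smul_right] at hip; exact hip
      have h3 := ipos (S.ne0 hα)
      nlinarith
    rcases S.ratio hα hβ hc with h | h | h | h | h | h
    · exact absurd (by rw [hc, h, one_smul]) hne.symm
    · linarith
    · have e : α - β = -α := by rw [hc, h]; module
      rw [e]; exact S.neg_mem hα
    · linarith
    · have e : α - β = β := by rw [hc, h]; module
      rw [e]; exact hβ
    · linarith
  · push_neg at hprop
    obtain ⟨p, hp⟩ := S.hcrys α hα β hβ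
    obtain ⟨q, hq⟩ := S.hcrys β hβ α hα
    have hαα := ipos (S.ne0 hα)
    have hββ := ipos (S.ne0 hβ)
    have hcs := strictCS (S.ne0 hα) hprop
    have hppos : 0 < copair α β := by
      unfold copair
      apply div_pos _ hαα
      rw [real_inner_comm α β]
      linarith
    have hqpos : 0 < copair β α := by
      unfold copair
      apply div_pos _ hββ
      linarith
    have hp1 : 1 ≤ p := by
      have : (0:ℝ) < p := hp ▸ hppos
      exact_mod_cast this
    have hq1 : 1 ≤ q := by
      have : (0:ℝ) < q := hq ▸ hqpos
      exact_mod_cast this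
    have hprod : copair α β * copair β α = 4 * ⟪β, α⟫ ^ 2 / (⟪α, α⟫ * ⟪β, β⟫) := by
      unfold copair
      rw [real_inner_comm β α]
      field_simp
      ring
    have hlt : (p : ℝ) * (q : ℝ) < 4 := by
      rw [← hp, ← hq, hprod]
      rw [div_lt_iff₀ (by positivity)]
      nlinarith
    have hlt' : p * q < 4 := by exact_mod_cast hlt
    have hcase : p = 1 ∨ q = 1 := by
      by_contra hcon
      push_neg at hcon
      have hp2 : 2 ≤ p := by omega
      have hq2 : 2 ≤ q := by omega
      nlinarith
    rcases hcase with h1 | h1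
    · have : reflRoot α β = β - α := by
        unfold reflRoot
        rw [hp, h1]
        push_cast
        module
      have hmem := S.hrc α hα β hβ
      rw [this] at hmem
      have := S.neg_mem hmem
      rwa [neg_sub] at this
    · have : reflRoot β α = α - β := by
        unfold reflRoot
        rw [hq, h1]
        push_cast
        module
      have hmem := S.hrc β hβ α hα
      rwa [this] at hmem

end RSys
end Dev3
section Dev4
variable {E : Type*} [NormedAddCommGroup E] [InnerProductSpace ℝ E] [DecidableEq E]
namespace RSys
variable (S : RSys E)

open Finset

/-- positive indivisible roots -/
noncomputable def IndP : Finset E :=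
  S.Rp.filter (fun α => ¬ ((2⁻¹ : ℝ) • α ∈ S.R))

lemma mem_IndP {α : E} : α ∈ S.IndP ↔ α ∈ S.Rp ∧ ¬ ((2⁻¹ : ℝ) • α ∈ S.R) :=
  Finset.mem_filter

lemma IndP_Rp : S.IndP ⊆ S.Rp := Finset.filter_subset _ _

lemma not_ind_two_smul {γ β : E} (hγ : γ ∈ S.R) (hβ : β ∈ S.IndP) :
    β ≠ (2 : ℝ) • γ := by
  intro he
  have h2 : (2⁻¹ : ℝ) • β ∈ S.R := by
    rw [he, smul_smul]
    norm_num
    exact hγ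
  exact ((S.mem_IndP).1 hβ).2 h2

lemma good_ind {g : E ≃ₗ[ℝ] E} (hg : S.IsGood g) {α : E}
    (hind : ¬ ((2⁻¹ : ℝ) • α ∈ S.R)) : ¬ ((2⁻¹ : ℝ) • (g α) ∈ S.R) := by
  intro hc
  have h2 : g.symm ((2⁻¹ : ℝ) • (g α)) ∈ S.R := hg.2.2 _ hc
  rw [map_smul, g.symm_apply_apply] at h2
  exact hind h2

/-- simple roots: indecomposable positive roots -/
noncomputable def Delta : Finset E :=
  S.Rp.filter (fun α => ¬ ∃ β ∈ S.Rp, ∃ γ ∈ S.Rp, α = β + γ)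

lemma Delta_Rp : S.Delta ⊆ S.Rp := Finset.filter_subset _ _

lemma mem_Delta_not_dec {α : E} (h : α ∈ S.Delta) :
    ¬ ∃ β ∈ S.Rp, ∃ γ ∈ S.Rp, α = β + γ := (Finset.mem_filter.1 h).2

lemma Delta_ind {α : E} (h : α ∈ S.Delta) : α ∈ S.IndP := by
  rw [mem_IndP]
  refine ⟨S.Delta_Rp h, fun hhalf => ?_⟩
  have hhRp : (2⁻¹ : ℝ) • α ∈ S.Rp := by
    apply S.mem_Rp hhalf
    rw [map_smul]
    have := S.Rpf (S.Delta_Rp h)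
    simp only [smul_eq_mul]
    linarith
  exact S.mem_Delta_not_dec h ⟨_, hhRp, _, hhRp, by module⟩

lemma combo : ∀ α ∈ S.Rp, ∃ a : E → ℝ,
    (∀ δ, 0 ≤ a δ) ∧ α = ∑ δ ∈ S.Delta, a δ • δ := by
  suffices H : ∀ n : ℕ, ∀ α ∈ S.Rp, (S.Rp.filter (fun β => S.f β < S.f α)).card ≤ n →
      ∃ a : E → ℝ, (∀ δ, 0 ≤ a δ) ∧ α = ∑ δ ∈ S.Delta, a δ • δ by
    exact fun α hα => H _ α hα le_rfl
  intro n
  induction n with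
  | zero =>
      intro α hα hcard
      by_cases hδ : α ∈ S.Delta
      · refine ⟨fun δ => if δ = α then 1 else 0, fun δ => by positivity, ?_⟩
        rw [Finset.sum_eq_single α]
        · simp
        · intro δ _ hne; simp [hne]
        · intro h; exact absurd hδ h
      · exfalso
        have hdec : ∃ β ∈ S.Rp, ∃ γ ∈ S.Rp, α = β + γ := by
          by_contra hcon
          exact hδ (Finset.mem_filter.2 ⟨hα, hcon⟩)
        obtain ⟨β, hβ, γ, hγ, he⟩ := hdec
        have hflt : S.f β < S.f α := by
          rw [he, map_add]; have := S.Rpf hγ; linarith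
        have hmm : β ∈ S.Rp.filter (fun β' => S.f β' < S.f α) :=
          Finset.mem_filter.2 ⟨hβ, hflt⟩
        have := Finset.card_pos.2 ⟨β, hmm⟩
        omega
  | succ n ih =>
      intro α hα hcard
      by_cases hδ : α ∈ S.Delta
      · refine ⟨fun δ => if δ = α then 1 else 0, fun δ => by positivity, ?_⟩
        rw [Finset.sum_eq_single α]
        · simp
        · intro δ _ hne; simp [hne]
        · intro h; exact absurd hδ h
      · have hdec : ∃ β ∈ S.Rp, ∃ γ ∈ S.Rp, α = β + γ := by
          by_contra hcon
          exact hδ (Finset.mem_filter.2 ⟨hα, hcon⟩)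
        obtain ⟨β, hβ, γ, hγ, he⟩ := hdec
        have hfβ := S.Rpf hβ
        have hfγ := S.Rpf hγ
        have hfα : S.f α = S.f β + S.f γ := by rw [he, map_add]
        have key : ∀ μ, μ ∈ S.Rp → S.f μ < S.f α →
            (S.Rp.filter (fun β' => S.f β' < S.f μ)).card ≤ n := by
          intro μ hμ hlt
          have hsub : S.Rp.filter (fun β' => S.f β' < S.f μ) ⊆
              S.Rp.filter (fun β' => S.f β' < S.f α) := by
            intro x hx
            have hx' := Finset.mem_filter.1 hx
            exact Finset.mem_filter.2 ⟨hx'.1, lt_trans hx'.2 hlt⟩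
          have hss : S.Rp.filter (fun β' => S.f β' < S.f μ) ⊂
              S.Rp.filter (fun β' => S.f β' < S.f α) :=
            (Finset.ssubset_iff_of_subset hsub).2
              ⟨μ, Finset.mem_filter.2 ⟨hμ, hlt⟩,
                fun hcon => absurd (Finset.mem_filter.1 hcon).2 (lt_irrefl _)⟩
          have := Finset.card_lt_card hss
          omega
        obtain ⟨a, ha0, hae⟩ := ih β hβ (key β hβ (by linarith))
        obtain ⟨b, hb0, hbe⟩ := ih γ hγ (key γ hγ (by linarith))
        refine ⟨fun δ => a δ + b δ, fun δ => add_nonneg (ha0 δ) (hb0 δ), ?_⟩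
        rw [he, hae, hbe, ← Finset.sum_add_distrib]
        exact Finset.sum_congr rfl fun δ _ => by rw [add_smul]

lemma obtuse {γ δ : E} (hγ : γ ∈ S.Delta) (hδ : δ ∈ S.Delta) (hne : γ ≠ δ) :
    ⟪γ, δ⟫ ≤ 0 := by
  by_contra hcon
  push_neg at hcon
  have hγR := S.RpR (S.Delta_Rp hγ)
  have hδR := S.RpR (S.Delta_Rp hδ)
  have hd : γ - δ ∈ S.R := S.diff_mem hγR hδR hcon hne
  rcases S.pos_or_neg hd with h1 | h1
  · exact S.mem_Delta_not_dec hγ ⟨δ, S.Delta_Rp hδ, γ - δ, h1, by module⟩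
  · rw [neg_sub] at h1
    exact S.mem_Delta_not_dec hδ ⟨γ, S.Delta_Rp hγ, δ - γ, h1, by module⟩

lemma indep (d : E → ℝ) (h : ∑ δ ∈ S.Delta, d δ • δ = 0) :
    ∀ δ ∈ S.Delta, d δ = 0 := by
  classical
  set P := S.Delta.filter (fun δ => 0 < d δ) with hPdef
  set N := S.Delta.filter (fun δ => d δ < 0) with hNdef
  have hPN : Disjoint P N := by
    rw [Finset.disjoint_left]
    intro δ hP hN
    have h1 := (Finset.mem_filter.1 hP).2
    have h2 := (Finset.mem_filter.1 hN).2
    linarith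
  have hPΔ : P ⊆ S.Delta := Finset.filter_subset _ _
  have hNΔ : N ⊆ S.Delta := Finset.filter_subset _ _
  have hsplit : ∑ δ ∈ P ∪ N, d δ • δ = ∑ δ ∈ S.Delta, d δ • δ := by
    apply Finset.sum_subset (Finset.union_subset hPΔ hNΔ)
    intro δ hδ hnot
    have h1 : ¬ (0 < d δ) := fun hc => hnot (Finset.mem_union_left _ (Finset.mem_filter.2 ⟨hδ, hc⟩))
    have h2 : ¬ (d δ < 0) := fun hc => hnot (Finset.mem_union_right _ (Finset.mem_filter.2 ⟨hδ, hc⟩))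
    have h3 : d δ = 0 := by linarith
    rw [h3, zero_smul]
  have hPNsum : (∑ δ ∈ P, d δ • δ) + ∑ δ ∈ N, d δ • δ = 0 := by
    rw [← Finset.sum_union hPN, hsplit, h]
  set v := ∑ δ ∈ P, d δ • δ with hvdef
  have hvN : v = ∑ δ ∈ N, (- d δ) • δ := by
    have h2 : ∑ δ ∈ N, (- d δ) • δ = - ∑ δ ∈ N, d δ • δ := by
      rw [← Finset.sum_neg_distrib]
      exact Finset.sum_congr rfl fun δ _ => by rw [neg_smul]
    rw [h2]
    exact eq_neg_of_add_eq_zero_left hPNsum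
  have hvv : ⟪v, v⟫ ≤ 0 := by
    have hexp : ⟪v, ∑ ε ∈ N, (- d ε) • ε⟫ = ∑ δ ∈ P, ∑ ε ∈ N, (d δ * (- d ε)) * ⟪δ, ε⟫ := by
      rw [hvdef, sum_inner]
      refine Finset.sum_congr rfl fun δ hδ => ?_
      rw [inner_sum]
      refine Finset.sum_congr rfl fun ε hε => ?_
      rw [real_inner_smul_left, real_inner_smul_right]; ring
    nth_rewrite 2 [hvN]
    rw [hexp]
    apply Finset.sum_nonpos
    intro δ hδ
    apply Finset.sum_nonpos
    intro ε hε
    have hδ' := Finset.mem_filter.1 hδ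
    have hε' := Finset.mem_filter.1 hε
    have hne : δ ≠ ε := fun hc => by rw [hc] at hδ'; linarith [hδ'.2, hε'.2]
    apply mul_nonpos_of_nonneg_of_nonpos
    · apply mul_nonneg (le_of_lt hδ'.2); linarith [hε'.2]
    · exact S.obtuse hδ'.1 hε'.1 hne
  have hv0 : v = 0 := by
    by_contra hne
    exact absurd hvv (not_le.2 (ipos hne))
  have hfv : ∀ (Q : Finset E) (c : E → ℝ), Q ⊆ S.Delta →
      S.f (∑ δ ∈ Q, c δ • δ) = ∑ δ ∈ Q, c δ * S.f δ := by
    intro Q c hQ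
    rw [map_sum]
    exact Finset.sum_congr rfl fun δ _ => by rw [map_smul, smul_eq_mul]
  have hP : P = ∅ := by
    by_contra hne
    obtain ⟨μ, hμ⟩ := Finset.nonempty_of_ne_empty hne
    have hpos : 0 < ∑ δ ∈ P, d δ * S.f δ :=
      Finset.sum_pos (fun δ hδ => mul_pos (Finset.mem_filter.1 hδ).2
        (S.Rpf (S.Delta_Rp (hPΔ hδ)))) ⟨μ, hμ⟩
    have h2 : S.f v = ∑ δ ∈ P, d δ * S.f δ := by rw [hvdef]; exact hfv P d hPΔ
    rw [hv0, map_zero] at h2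
    linarith
  have hN : N = ∅ := by
    by_contra hne
    obtain ⟨μ, hμ⟩ := Finset.nonempty_of_ne_empty hne
    have hpos : 0 < ∑ δ ∈ N, (- d δ) * S.f δ :=
      Finset.sum_pos (fun δ hδ => mul_pos (by linarith [(Finset.mem_filter.1 hδ).2])
        (S.Rpf (S.Delta_Rp (hNΔ hδ)))) ⟨μ, hμ⟩
    have h2 : S.f v = ∑ δ ∈ N, (- d δ) * S.f δ := by rw [hvN]; exact hfv N _ hNΔ
    rw [hv0, map_zero] at h2
    linarith
  intro δ hδ
  have h1 : δ ∉ P := by rw [hP]; exact Finset.notMem_empty δ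
  have h2 : δ ∉ N := by rw [hN]; exact Finset.notMem_empty δ
  by_contra hne
  rcases lt_or_gt_of_ne hne with hlt | hgt
  · exact h2 (Finset.mem_filter.2 ⟨hδ, hlt⟩)
  · exact h1 (Finset.mem_filter.2 ⟨hδ, hgt⟩)

/-- key lemma: a simple reflection permutes the positive roots other than `γ, 2γ` -/
lemma simple_reflect {γ α : E} (hγ : γ ∈ S.Delta) (hα : α ∈ S.Rp) (h1 : α ≠ γ)
    (h2 : α ≠ (2 : ℝ) • γ) : reflRoot γ α ∈ S.Rp := by
  have hγRp := S.Delta_Rp hγ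
  have hγR := S.RpR hγRp
  have hγ0 := S.ne0 hγR
  have hmem : reflRoot γ α ∈ S.R := S.hrc γ hγR α (S.RpR hα)
  by_contra hcon
  have hneg : -(reflRoot γ α) ∈ S.Rp := (S.pos_or_neg hmem).resolve_left hcon
  obtain ⟨a, ha0, hae⟩ := S.combo α hα
  obtain ⟨b, hb0, hbe⟩ := S.combo _ hneg
  set k := copair γ α with hkdef
  have hsum : ∑ δ ∈ S.Delta, (a δ + b δ) • δ = k • γ := by
    have e1 : α + -(reflRoot γ α) = k • γ := by unfold reflRoot; rw [← hkdef]; module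
    rw [← e1]
    nth_rewrite 1 [hae]
    nth_rewrite 1 [hbe]
    rw [← Finset.sum_add_distrib]
    exact Finset.sum_congr rfl fun δ _ => by rw [add_smul]
  set d : E → ℝ := fun δ => (a δ + b δ) - (if δ = γ then k else 0) with hddef
  have hd : ∑ δ ∈ S.Delta, d δ • δ = 0 := by
    have hind : ∑ δ ∈ S.Delta, (if δ = γ then k else 0) • δ = k • γ := by
      rw [Finset.sum_eq_single γ]
      · simp
      · intro δ _ hne; simp [hne]
      · intro h; exact absurd hγ h
    have : ∑ δ ∈ S.Delta, d δ • δ =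
        (∑ δ ∈ S.Delta, (a δ + b δ) • δ) - ∑ δ ∈ S.Delta, (if δ = γ then k else 0) • δ := by
      rw [← Finset.sum_sub_distrib]
      exact Finset.sum_congr rfl fun δ _ => by rw [hddef]; rw [sub_smul]
    rw [this, hsum, hind, sub_self]
  have hz := S.indep d hd
  have haz : ∀ δ ∈ S.Delta, δ ≠ γ → a δ = 0 := by
    intro δ hδ hne
    have hzd := hz δ hδ
    rw [hddef] at hzd
    simp only [hne, if_false] at hzd
    have := ha0 δ
    have := hb0 δ
    linarith
  have hXα : α = a γ • γ := by
    rw [hae, Finset.sum_eq_single γ]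
    · intro δ hδ hne; rw [haz δ hδ hne, zero_smul]
    · intro h; exact absurd hγ h
  have hapos : 0 < a γ := by
    have hfa : S.f α = a γ * S.f γ := by rw [hXα, map_smul, smul_eq_mul]
    have h3 := S.Rpf hα
    have h4 := S.Rpf hγRp
    nlinarith
  rcases S.ratio hγR (S.RpR hα) hXα with h | h | h | h | h | h
  · rw [h, one_smul] at hXα; exact h1 hXα
  · linarith
  · rw [h] at hXα; exact h2 hXα
  · linarith
  · rw [h] at hXα
    have : (2⁻¹ : ℝ) • γ ∈ S.R := hXα ▸ (S.RpR hα)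
    exact ((S.mem_IndP).1 (S.Delta_ind hγ)).2 this
  · linarith

lemma simple_reflect_ind {γ β : E} (hγ : γ ∈ S.Delta) (hβ : β ∈ S.IndP) (h1 : β ≠ γ) :
    reflRoot γ β ∈ S.IndP := by
  have hγR := S.RpR (S.Delta_Rp hγ)
  have hRp : reflRoot γ β ∈ S.Rp :=
    S.simple_reflect hγ (S.IndP_Rp hβ) h1 (S.not_ind_two_smul hγR hβ)
  rw [mem_IndP]
  refine ⟨hRp, ?_⟩
  have hgood := S.good_rflE hγR
  have hind := ((S.mem_IndP).1 hβ).2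
  have := S.good_ind hgood hind
  rwa [rflE_apply (S.ne0 hγR)] at this

lemma neg_reflect_eq {γ β : E} (hγ : γ ∈ S.Delta) (hβ : β ∈ S.IndP)
    (hneg : reflRoot γ β ∉ S.Rp) : β = γ := by
  by_contra hne
  exact hneg (S.IndP_Rp (S.simple_reflect_ind hγ hβ hne))

end RSys
end Dev4
section Dev5
variable {E : Type*} [NormedAddCommGroup E] [InnerProductSpace ℝ E] [DecidableEq E]
namespace RSys
variable (S : RSys E)

open Finset

lemma good_copair {g : E ≃ₗ[ℝ] E} (hg : S.IsGood g) (α x : E) :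
    copair (g α) (g x) = copair α x := by
  unfold copair; rw [hg.1, hg.1]

noncomputable def rho : E := (2⁻¹ : ℝ) • ∑ α ∈ S.Rp, α

noncomputable def cc (β : E) : ℝ := if (2 : ℝ) • β ∈ S.R then 3 else 1

lemma cc_pos (β : E) : 0 < S.cc β := by
  unfold cc; split <;> norm_num

lemma two_smul_mem_Rp {γ : E} (hγ : γ ∈ S.Rp) (h : (2 : ℝ) • γ ∈ S.R) :
    (2 : ℝ) • γ ∈ S.Rp := by
  apply S.mem_Rp h
  rw [map_smul, smul_eq_mul]
  have := S.Rpf hγ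
  linarith

lemma two_smul_ne {γ : E} (hγ0 : γ ≠ 0) : (2 : ℝ) • γ ≠ γ := by
  intro h
  apply hγ0
  have h2 : (2 : ℝ) • γ - γ = γ - γ := by rw [h]
  rw [sub_self] at h2
  have h3 : (2 : ℝ) • γ - γ = γ := by module
  rw [h3] at h2
  exact h2

lemma reflRoot_two_smul {γ : E} (hγ0 : γ ≠ 0) :
    reflRoot γ ((2:ℝ) • γ) = -((2:ℝ) • γ) := by
  unfold reflRoot
  rw [copair_smul, copair_self hγ0]
  module

lemma reflRoot_self {γ : E} (hγ0 : γ ≠ 0) : reflRoot γ γ = -γ := by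
  unfold reflRoot; rw [copair_self hγ0]; module

lemma reflRoot_rho {γ : E} (hγ : γ ∈ S.Delta) :
    reflRoot γ S.rho = S.rho - S.cc γ • γ := by
  classical
  have hγRp := S.Delta_Rp hγ
  have hγR := S.RpR hγRp
  have hγ0 := S.ne0 hγR
  set A : Finset E := (S.Rp.erase γ).erase ((2:ℝ) • γ) with hAdef
  have hmemA : ∀ α, α ∈ A ↔ α ∈ S.Rp ∧ α ≠ γ ∧ α ≠ (2:ℝ) • γ := by
    intro α
    rw [hAdef, Finset.mem_erase, Finset.mem_erase]
    tauto
  have hmaps : ∀ α ∈ A, reflRoot γ α ∈ A := by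
    intro α hα
    obtain ⟨h1, h2, h3⟩ := (hmemA α).1 hα
    have hr : reflRoot γ α ∈ S.Rp := S.simple_reflect hγ h1 h2 h3
    rw [hmemA]
    refine ⟨hr, ?_, ?_⟩
    · intro hc
      have hthis : α = reflRoot γ (reflRoot γ α) := (reflRoot_invol hγ0 α).symm
      rw [hc, reflRoot_self hγ0] at hthis
      rw [hthis] at h1
      exact S.neg_not_Rp hγRp h1
    · intro hc
      have hthis : α = reflRoot γ (reflRoot γ α) := (reflRoot_invol hγ0 α).symm
      rw [hc, reflRoot_two_smul hγ0] at hthis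
      rename_i foo
      have this := hthis
      have hf := S.Rpf h1
      rw [this, map_neg, map_smul, smul_eq_mul] at hf
      have := S.Rpf hγRp
      linarith
  have hsumA : ∑ α ∈ A, reflRoot γ α = ∑ α ∈ A, α := by
    apply Finset.sum_nbij' (fun α => reflRoot γ α) (fun α => reflRoot γ α)
      hmaps hmaps (fun α _ => reflRoot_invol hγ0 α) (fun α _ => reflRoot_invol hγ0 α)
    intro α _
    rfl
  have hrlin : reflRoot γ S.rho = (2⁻¹:ℝ) • ∑ α ∈ S.Rp, reflRoot γ α := by
    show reflLM γ S.rho = _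
    unfold rho
    rw [map_smul, map_sum]
    rfl
  have hγmem : γ ∈ S.Rp := hγRp
  by_cases h2γ : (2:ℝ) • γ ∈ S.Rp
  · have h2ne : (2:ℝ) • γ ≠ γ := two_smul_ne hγ0
    have h2mem : (2:ℝ) • γ ∈ S.Rp.erase γ := Finset.mem_erase.2 ⟨h2ne, h2γ⟩
    have e1 : ∀ F : E → E, ∑ α ∈ S.Rp, F α = (∑ α ∈ A, F α) + F ((2:ℝ)•γ) + F γ := by
      intro F
      rw [← Finset.sum_erase_add S.Rp F hγmem, ← Finset.sum_erase_add (S.Rp.erase γ) F h2mem]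
    have hccγ : S.cc γ = 3 := by unfold cc; rw [if_pos (S.RpR h2γ)]
    rw [hrlin, e1 (reflRoot γ), hsumA, reflRoot_two_smul hγ0, reflRoot_self hγ0, hccγ]
    have e2 : S.rho = (2⁻¹:ℝ) • ((∑ α ∈ A, α) + (2:ℝ)•γ + γ) := by
      unfold rho; rw [e1 (fun α => α)]
    rw [e2]
    module
  · have h2notR : ¬ ((2:ℝ) • γ ∈ S.R) := fun hc => h2γ (S.two_smul_mem_Rp hγRp hc)
    have hccγ : S.cc γ = 1 := by unfold cc; rw [if_neg h2notR]
    have hAeq : A = S.Rp.erase γ := by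
      rw [hAdef]
      apply Finset.erase_eq_of_notMem
      intro hc
      exact h2γ (Finset.mem_of_mem_erase hc)
    have e1 : ∀ F : E → E, ∑ α ∈ S.Rp, F α = (∑ α ∈ A, F α) + F γ := by
      intro F
      rw [hAeq, Finset.sum_erase_add S.Rp F hγmem]
    rw [hrlin, e1 (reflRoot γ), hsumA, reflRoot_self hγ0, hccγ]
    have e2 : S.rho = (2⁻¹:ℝ) • ((∑ α ∈ A, α) + γ) := by
      unfold rho; rw [e1 (fun α => α)]
    rw [e2]
    module

lemma copair_rho_simple {γ : E} (hγ : γ ∈ S.Delta) : copair γ S.rho = S.cc γ := by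
  have hγ0 := S.ne0 (S.RpR (S.Delta_Rp hγ))
  have h1 := S.reflRoot_rho hγ
  unfold reflRoot at h1
  have h2 : copair γ S.rho • γ = S.cc γ • γ := by
    have := sub_right_inj.1 h1
    exact this
  have h3 : (copair γ S.rho - S.cc γ) • γ = 0 := by
    rw [sub_smul, h2, sub_self]
  rcases smul_eq_zero.1 h3 with h4 | h4
  · linarith [sub_eq_zero.1 (by linarith [h4] : copair γ S.rho - S.cc γ = 0)]
  · exact absurd h4 hγ0

lemma inner_rho_delta_pos {δ : E} (hδ : δ ∈ S.Delta) : 0 < ⟪S.rho, δ⟫ := by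
  have hδ0 := S.ne0 (S.RpR (S.Delta_Rp hδ))
  have h1 := S.copair_rho_simple hδ
  have h2 := S.cc_pos δ
  have h3 := ipos hδ0
  unfold copair at h1
  have h4 : 2 * ⟪S.rho, δ⟫ = S.cc δ * ⟪δ, δ⟫ := (div_eq_iff (ine hδ0)).1 h1
  nlinarith

lemma copair_rho_pos {β : E} (hβ : β ∈ S.Rp) : 0 < copair β S.rho := by
  have hβ0 := S.ne0 (S.RpR hβ)
  obtain ⟨a, ha0, hae⟩ := S.combo β hβ
  have hip : 0 < ⟪S.rho, β⟫ := by
    have hexp : ⟪S.rho, β⟫ = ∑ δ ∈ S.Delta, a δ * ⟪S.rho, δ⟫ := by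
      rw [hae, inner_sum]
      exact Finset.sum_congr rfl fun δ _ => by rw [real_inner_smul_right]
    rw [hexp]
    apply Finset.sum_pos'
    · intro δ hδ
      exact mul_nonneg (ha0 δ) (le_of_lt (S.inner_rho_delta_pos hδ))
    · have hnz : ∃ δ ∈ S.Delta, a δ ≠ 0 := by
        by_contra hc
        push_neg at hc
        apply hβ0
        rw [hae]
        apply Finset.sum_eq_zero
        intro δ hδ
        rw [hc δ hδ, zero_smul]
      obtain ⟨δ, hδ, hne⟩ := hnz
      exact ⟨δ, hδ, mul_pos (lt_of_le_of_ne (ha0 δ) (Ne.symm hne)) (S.inner_rho_delta_pos hδ)⟩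
  unfold copair
  exact div_pos (by linarith) (ipos hβ0)

lemma cc_neg (β : E) : S.cc (-β) = S.cc β := by
  unfold cc
  have : ((2:ℝ) • -β ∈ S.R) ↔ ((2:ℝ) • β ∈ S.R) := by
    rw [smul_neg]
    constructor
    · intro h; have := S.neg_mem h; rwa [neg_neg] at this
    · exact S.neg_mem
  simp only [this]

lemma cc_w {g : E ≃ₗ[ℝ] E} (hg : S.IsGood g) (β : E) : S.cc (g β) = S.cc β := by
  unfold cc
  have : ((2:ℝ) • g β ∈ S.R) ↔ ((2:ℝ) • β ∈ S.R) := by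
    rw [← map_smul]
    constructor
    · intro h
      have := hg.2.2 _ h
      rwa [g.symm_apply_apply] at this
    · exact fun h => hg.2.1 _ h
  simp only [this]

end RSys
end Dev5
section Dev6
variable {E : Type*} [NormedAddCommGroup E] [InnerProductSpace ℝ E] [DecidableEq E]
namespace RSys
variable (S : RSys E)

open Finset

lemma LEapply_mul (a b : E ≃ₗ[ℝ] E) (x : E) : (a * b) x = a (b x) := rfl

lemma LEapply_one (x : E) : (1 : E ≃ₗ[ℝ] E) x = x := rfl

noncomputable def sProd (l : List E) : E ≃ₗ[ℝ] E := (l.map rflE).prod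

lemma sProd_nil : sProd ([] : List E) = 1 := rfl

lemma sProd_cons (γ : E) (t : List E) : sProd (γ :: t) = rflE γ * sProd t := by
  unfold sProd; rw [List.map_cons, List.prod_cons]

lemma sProd_append (l t : List E) : sProd (l ++ t) = sProd l * sProd t := by
  unfold sProd; rw [List.map_append, List.prod_append]

lemma sProd_singleton (γ : E) : sProd [γ] = rflE γ := by
  unfold sProd; simp

lemma sProd_concat (l : List E) (γ : E) : sProd (l.concat γ) = sProd l * rflE γ := by
  rw [List.concat_eq_append, sProd_append, sProd_singleton]

lemma rflE_mem {α : E} (hα : α ∈ S.R) : rflE α ∈ weylGroup S.R :=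
  Subgroup.subset_closure ⟨α, hα, fun x => rflE_apply (S.ne0 hα) x⟩

lemma sProd_mem {l : List E} (hl : ∀ γ ∈ l, γ ∈ S.Delta) : sProd l ∈ weylGroup S.R := by
  induction l with
  | nil => rw [sProd_nil]; exact (weylGroup S.R).one_mem
  | cons γ t ih =>
      rw [sProd_cons]
      exact mul_mem (S.rflE_mem (S.RpR (S.Delta_Rp (hl γ (by simp)))))
        (ih (fun γ' h => hl γ' (by simp [h])))

lemma sProd_reverse (l : List E) (hl : ∀ γ ∈ l, γ ∈ S.Delta) :
    sProd l.reverse = (sProd l)⁻¹ := by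
  induction l with
  | nil => rw [List.reverse_nil, sProd_nil, inv_one]
  | cons γ t ih =>
      rw [List.reverse_cons, ← List.concat_eq_append, sProd_concat, sProd_cons, mul_inv_rev,
        ih (fun γ' h => hl γ' (by simp [h])),
        rflE_inv (S.ne0 (S.RpR (S.Delta_Rp (hl γ (by simp)))))]

lemma conj_rflE {g : E ≃ₗ[ℝ] E} (hg : S.IsGood g) {α : E} (hα : α ∈ S.R) :
    rflE (g α) = g * rflE α * g⁻¹ := by
  have hα0 := S.ne0 hα
  have hgα0 := S.ne0 (hg.2.1 α hα)
  apply LinearEquiv.toLinearMap_injective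
  apply LinearMap.ext
  intro x
  show rflE (g α) x = g (rflE α (g.symm x))
  rw [rflE_apply hgα0, rflE_apply hα0]
  unfold reflRoot
  rw [map_sub, map_smul, g.apply_symm_apply]
  congr 2
  have h2 := S.good_copair hg α (g.symm x)
  rw [g.apply_symm_apply] at h2
  rw [h2]

lemma deletion : ∀ (l : List E), (∀ γ ∈ l, γ ∈ S.Delta) → ∀ γ0 ∈ S.Delta,
    S.f (sProd l γ0) < 0 →
    ∃ l1 l2 δ, l = l1 ++ δ :: l2 ∧ sProd (l1 ++ l2) = sProd l * rflE γ0 := by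
  intro l
  induction l with
  | nil =>
      intro _ γ0 hγ0 hneg
      rw [sProd_nil, LEapply_one] at hneg
      have := S.Rpf (S.Delta_Rp hγ0)
      linarith
  | cons δ t ih =>
      intro hl γ0 hγ0 hneg
      have hδΔ : δ ∈ S.Delta := hl δ (by simp)
      have htΔ : ∀ γ ∈ t, γ ∈ S.Delta := fun γ h => hl γ (by simp [h])
      have hγ0R : γ0 ∈ S.R := S.RpR (S.Delta_Rp hγ0)
      have hgood : S.IsGood (sProd t) := S.good_mem (S.sProd_mem htΔ)
      set β := sProd t γ0 with hβdef
      have hβR : β ∈ S.R := hgood.2.1 γ0 hγ0R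
      have hβf : S.f β ≠ 0 := S.hf β hβR
      rcases lt_or_gt_of_ne hβf with hcase | hcase
      · obtain ⟨l1, l2, δ', hsplit, hprod⟩ := ih htΔ γ0 hγ0 hcase
        refine ⟨δ :: l1, l2, δ', by rw [hsplit]; rfl, ?_⟩
        have : sProd (δ :: l1 ++ l2) = rflE δ * sProd (l1 ++ l2) := sProd_cons _ _
        rw [this, hprod, sProd_cons, mul_assoc]
      · have hβRp : β ∈ S.Rp := S.mem_Rp hβR hcase
        have hβind : β ∈ S.IndP := by
          rw [mem_IndP]
          exact ⟨hβRp, S.good_ind hgood (((S.mem_IndP).1 (S.Delta_ind hγ0)).2)⟩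
        have hrβ : S.f (reflRoot δ β) < 0 := by
          have he : reflRoot δ β = sProd (δ :: t) γ0 := by
            rw [sProd_cons, LEapply_mul, ← hβdef,
              rflE_apply (S.ne0 (S.RpR (S.Delta_Rp hδΔ)))]
          rw [he]
          exact hneg
        have hrβnot : reflRoot δ β ∉ S.Rp := fun hc => by
          have := S.Rpf hc; linarith
        have hβδ : β = δ := S.neg_reflect_eq hδΔ hβind hrβnot
        have hconj : rflE δ = sProd t * rflE γ0 * (sProd t)⁻¹ := by
          rw [show rflE δ = rflE (sProd t γ0) by rw [← hβdef, hβδ]]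
          exact S.conj_rflE hgood hγ0R
        refine ⟨[], t, δ, rfl, ?_⟩
        have hsq : rflE γ0 * rflE γ0 = 1 := by
          nth_rewrite 1 [← rflE_inv (S.ne0 hγ0R)]
          exact inv_mul_cancel _
        show sProd ([] ++ t) = sProd (δ :: t) * rflE γ0
        rw [List.nil_append, sProd_cons, hconj]
        rw [mul_assoc (sProd t * rflE γ0) (sProd t)⁻¹ (sProd t), inv_mul_cancel, mul_one,
          mul_assoc, hsq, mul_one]

lemma exists_neg_simple_aux : ∀ n : ℕ, ∀ l : List E, l.length ≤ n →
    (∀ γ ∈ l, γ ∈ S.Delta) → sProd l ≠ 1 →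
    ∃ γ ∈ S.Delta, S.f (sProd l γ) < 0 := by
  intro n
  induction n with
  | zero =>
      intro l hlen _ hne
      rw [List.length_eq_zero_iff.1 (Nat.le_zero.1 hlen)] at hne
      exact absurd sProd_nil hne
  | succ n ih =>
      intro l hlen hl hne
      rcases List.eq_nil_or_concat l with rfl | ⟨t, γk, rfl⟩
      · exact absurd sProd_nil hne
      · have hγk : γk ∈ S.Delta := hl γk (by simp)
        have htΔ : ∀ γ ∈ t, γ ∈ S.Delta := fun γ h => hl γ (by simp [h])
        have hγkR : γk ∈ S.R := S.RpR (S.Delta_Rp hγk)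
        by_cases hcase : S.f (sProd (t.concat γk) γk) < 0
        · exact ⟨γk, hγk, hcase⟩
        · have hgood : S.IsGood (sProd (t.concat γk)) :=
            S.good_mem (S.sProd_mem hl)
          have hMem : sProd (t.concat γk) γk ∈ S.R := hgood.2.1 γk hγkR
          have hpos : 0 < S.f (sProd (t.concat γk) γk) := by
            rcases lt_or_gt_of_ne (S.hf _ hMem) with h | h
            · exact absurd h hcase
            · exact h
          have hkey : S.f (sProd t γk) < 0 := by
            have he : sProd (t.concat γk) γk = - (sProd t γk) := by
              rw [sProd_concat, LEapply_mul, rflE_apply (S.ne0 hγkR),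
                reflRoot_self (S.ne0 hγkR), map_neg]
            rw [he, map_neg] at hpos
            linarith
          obtain ⟨l1, l2, δ, hsplit, hprod⟩ := S.deletion t htΔ γk hγk hkey
          have hprod2 : sProd (l1 ++ l2) = sProd (t.concat γk) := by
            rw [hprod, sProd_concat]
          have hlen2 : (l1 ++ l2).length ≤ n := by
            have h1 : (t.concat γk).length = t.length + 1 := by simp
            have h2 : t.length = l1.length + 1 + l2.length := by rw [hsplit]; simp; omega
            have h3 : (l1 ++ l2).length = l1.length + l2.length := by simp
            omega
          have hmem2 : ∀ γ ∈ l1 ++ l2, γ ∈ S.Delta := by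
            intro γ h
            apply htΔ
            rw [hsplit]
            simp only [List.mem_append, List.mem_cons] at h ⊢
            tauto
          obtain ⟨γ, hγ, hneg⟩ := ih (l1 ++ l2) hlen2 hmem2 (by rw [hprod2]; exact hne)
          exact ⟨γ, hγ, by rwa [hprod2] at hneg⟩

lemma quarter_not_mem {α : E} (hα : α ∈ S.R) (hhalf : (2⁻¹:ℝ) • α ∈ S.R) :
    ¬ ((2⁻¹:ℝ) • ((2⁻¹:ℝ) • α) ∈ S.R) := by
  intro hc
  have he : (2⁻¹:ℝ) • ((2⁻¹:ℝ) • α) = (4⁻¹ : ℝ) • α := by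
    rw [smul_smul]; norm_num
  rw [he] at hc
  rcases S.ratio hα hc rfl with h | h | h | h | h | h <;> norm_num at h

lemma half_mem_IndP {α : E} (hα : α ∈ S.Rp) (hhalf : (2⁻¹:ℝ) • α ∈ S.R) :
    (2⁻¹:ℝ) • α ∈ S.IndP := by
  rw [mem_IndP]
  constructor
  · apply S.mem_Rp hhalf
    rw [map_smul, smul_eq_mul]
    have := S.Rpf hα
    linarith
  · exact S.quarter_not_mem (S.RpR hα) hhalf

lemma expr_step {β : E} (hβ : β ∈ S.IndP) (hnotΔ : β ∉ S.Delta) :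
    ∃ δ ∈ S.Delta, β ≠ δ ∧ reflRoot δ β ∈ S.IndP ∧ S.f (reflRoot δ β) < S.f β := by
  obtain ⟨a, ha0, hae⟩ := S.combo β (S.IndP_Rp hβ)
  have hβ0 : β ≠ 0 := S.ne0 (S.RpR (S.IndP_Rp hβ))
  have hexp : ⟪β, β⟫ = ∑ δ ∈ S.Delta, a δ * ⟪β, δ⟫ := by
    nth_rewrite 2 [hae]
    rw [inner_sum]
    exact Finset.sum_congr rfl fun δ _ => by rw [real_inner_smul_right]
  have hpos := ipos hβ0
  have hex : ∃ δ ∈ S.Delta, 0 < a δ * ⟪β, δ⟫ := by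
    by_contra hc
    push_neg at hc
    have hs := Finset.sum_nonpos hc
    rw [← hexp] at hs
    linarith
  obtain ⟨δ, hδ, hprod⟩ := hex
  have hδ0 : δ ≠ 0 := S.ne0 (S.RpR (S.Delta_Rp hδ))
  have hip : 0 < ⟪β, δ⟫ := by
    by_contra hcon
    push_neg at hcon
    exact absurd hprod (not_lt.2 (mul_nonpos_of_nonneg_of_nonpos (ha0 δ) hcon))
  have hne : β ≠ δ := fun h => hnotΔ (h ▸ hδ)
  have hcop : 0 < copair δ β := by
    unfold copair
    exact div_pos (by linarith) (ipos hδ0)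
  have hrmem : reflRoot δ β ∈ S.IndP := S.simple_reflect_ind hδ hβ hne
  have hfl : S.f (reflRoot δ β) < S.f β := by
    unfold reflRoot
    rw [map_sub, map_smul, smul_eq_mul]
    have := S.Rpf (S.Delta_Rp hδ)
    nlinarith
  exact ⟨δ, hδ, hne, hrmem, hfl⟩

lemma card_lt_aux {β μ : E} (hμ : μ ∈ S.Rp) (hlt : S.f μ < S.f β) :
    (S.Rp.filter (fun x => S.f x < S.f μ)).card < (S.Rp.filter (fun x => S.f x < S.f β)).card := by
  apply Finset.card_lt_card
  apply (Finset.ssubset_iff_of_subset ?_).2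
  · exact ⟨μ, Finset.mem_filter.2 ⟨hμ, hlt⟩,
      fun hcon => absurd (Finset.mem_filter.1 hcon).2 (lt_irrefl _)⟩
  · intro x hx
    have hx' := Finset.mem_filter.1 hx
    exact Finset.mem_filter.2 ⟨hx'.1, lt_trans hx'.2 hlt⟩

lemma exists_expr_ind : ∀ n : ℕ, ∀ β ∈ S.IndP,
    (S.Rp.filter (fun μ => S.f μ < S.f β)).card ≤ n →
    ∃ l : List E, (∀ γ ∈ l, γ ∈ S.Delta) ∧ ∃ γ ∈ S.Delta, β = sProd l γ := by
  intro n
  induction n with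
  | zero =>
      intro β hβ hcard
      by_cases hδ : β ∈ S.Delta
      · exact ⟨[], by simp, β, hδ, by rw [sProd_nil, LEapply_one]⟩
      · exfalso
        obtain ⟨δ, hδ, hne, hrmem, hfl⟩ := S.expr_step hβ hδ
        have := S.card_lt_aux (β := β) (S.IndP_Rp hrmem) hfl
        omega
  | succ n ih =>
      intro β hβ hcard
      by_cases hδ : β ∈ S.Delta
      · exact ⟨[], by simp, β, hδ, by rw [sProd_nil, LEapply_one]⟩
      · obtain ⟨δ, hδ, hne, hrmem, hfl⟩ := S.expr_step hβ hδ
        have hδ0 : δ ≠ 0 := S.ne0 (S.RpR (S.Delta_Rp hδ))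
        have hcard2 : (S.Rp.filter (fun x => S.f x < S.f (reflRoot δ β))).card ≤ n := by
          have := S.card_lt_aux (β := β) (S.IndP_Rp hrmem) hfl
          omega
        obtain ⟨l, hlΔ, γ, hγ, he⟩ := ih (reflRoot δ β) hrmem hcard2
        refine ⟨δ :: l, ?_, γ, hγ, ?_⟩
        · intro x hx
          rcases List.mem_cons.1 hx with rfl | h
          · exact hδ
          · exact hlΔ x h
        · have hβe : β = reflRoot δ (reflRoot δ β) := (reflRoot_invol hδ0 β).symm
          rw [hβe, he, sProd_cons, LEapply_mul, rflE_apply hδ0]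

lemma rflE_expr {α : E} (hα : α ∈ S.R) :
    ∃ l : List E, (∀ γ ∈ l, γ ∈ S.Delta) ∧ sProd l = rflE α := by
  have main2 : ∀ μ ∈ S.IndP, ∃ l, (∀ γ ∈ l, γ ∈ S.Delta) ∧ sProd l = rflE μ := by
    intro μ hμ
    obtain ⟨l, hlΔ, γ, hγ, he⟩ := S.exists_expr_ind _ μ hμ le_rfl
    have hgood := S.good_mem (S.sProd_mem hlΔ)
    have hconj : rflE μ = sProd l * rflE γ * (sProd l)⁻¹ := by
      rw [he]; exact S.conj_rflE hgood (S.RpR (S.Delta_Rp hγ))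
    refine ⟨l ++ γ :: l.reverse, ?_, ?_⟩
    · intro x hx
      rcases List.mem_append.1 hx with h | h
      · exact hlΔ x h
      · rcases List.mem_cons.1 h with rfl | h2
        · exact hγ
        · exact hlΔ x (List.mem_reverse.1 h2)
    · rw [show l ++ γ :: l.reverse = (l ++ [γ]) ++ l.reverse by simp, sProd_append,
        sProd_append, sProd_singleton, S.sProd_reverse l hlΔ, hconj]
  have main : ∀ β ∈ S.Rp, ∃ l, (∀ γ ∈ l, γ ∈ S.Delta) ∧ sProd l = rflE β := by
    intro β hβ
    have hβ0 := S.ne0 (S.RpR hβ)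
    by_cases hind : (2⁻¹:ℝ) • β ∈ S.R
    · have hμ := S.half_mem_IndP hβ hind
      obtain ⟨l, h1, h2⟩ := main2 _ hμ
      refine ⟨l, h1, ?_⟩
      rw [h2]
      have hh0 : (2⁻¹:ℝ) • β ≠ 0 := S.ne0 hind
      have he2 : ((2:ℝ)) • ((2⁻¹:ℝ) • β) = β := by rw [smul_smul]; norm_num
      calc rflE ((2⁻¹:ℝ) • β) = rflE ((2:ℝ) • ((2⁻¹:ℝ) • β)) :=
            (rflE_smul_root hh0 2 (by norm_num)).symm
        _ = rflE β := by rw [he2]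
    · exact main2 β ((S.mem_IndP).2 ⟨hβ, hind⟩)
  rcases S.pos_or_neg hα with h | h
  · exact main α h
  · obtain ⟨l, h1, h2⟩ := main _ h
    exact ⟨l, h1, by rw [h2, rflE_neg (S.ne0 hα)]⟩

lemma mem_expr {g : E ≃ₗ[ℝ] E} (hg : g ∈ weylGroup S.R) :
    ∃ l : List E, (∀ γ ∈ l, γ ∈ S.Delta) ∧ sProd l = g := by
  induction hg using Subgroup.closure_induction with
  | mem x hx =>
      obtain ⟨α, hα, he⟩ := hx
      have hxe : x = rflE α := by
        apply LinearEquiv.toLinearMap_injective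
        apply LinearMap.ext
        intro y
        show x y = rflE α y
        rw [he y, rflE_apply (S.ne0 hα)]
      rw [hxe]
      exact S.rflE_expr hα
  | one => exact ⟨[], by simp, rfl⟩
  | mul x y hx hy ihx ihy =>
      obtain ⟨lx, h1, h2⟩ := ihx
      obtain ⟨ly, h3, h4⟩ := ihy
      refine ⟨lx ++ ly, fun γ h => ?_, by rw [sProd_append, h2, h4]⟩
      rcases List.mem_append.1 h with h | h
      · exact h1 γ h
      · exact h3 γ h
  | inv x hx ihx =>
      obtain ⟨l, h1, h2⟩ := ihx
      exact ⟨l.reverse, fun γ h => h1 γ (List.mem_reverse.1 h),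
        by rw [S.sProd_reverse l h1, h2]⟩

lemma neg_simple_of_ne_one {g : E ≃ₗ[ℝ] E} (hg : g ∈ weylGroup S.R) (hne : g ≠ 1) :
    ∃ γ ∈ S.Delta, S.f (g γ) < 0 := by
  obtain ⟨l, h1, h2⟩ := S.mem_expr hg
  obtain ⟨γ, hγ, hneg⟩ := S.exists_neg_simple_aux l.length l le_rfl h1 (by rw [h2]; exact hne)
  exact ⟨γ, hγ, by rwa [h2] at hneg⟩

end RSys
end Dev6
section Dev7
variable {E : Type*} [NormedAddCommGroup E] [InnerProductSpace ℝ E] [DecidableEq E]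
namespace RSys
variable (S : RSys E)

open Finset

lemma inv_apply_apply (g : E ≃ₗ[ℝ] E) (x : E) : g⁻¹ (g x) = x := by
  rw [← LEapply_mul, inv_mul_cancel, LEapply_one]

lemma apply_inv_apply (g : E ≃ₗ[ℝ] E) (x : E) : g (g⁻¹ x) = x := by
  rw [← LEapply_mul, mul_inv_cancel, LEapply_one]

lemma ind_neg {α : E} (h : ¬ ((2⁻¹:ℝ) • α ∈ S.R)) : ¬ ((2⁻¹:ℝ) • (-α) ∈ S.R) := by
  intro hc
  rw [smul_neg] at hc
  have := S.neg_mem hc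
  rw [neg_neg] at this
  exact h this

/-- for good `g` and a root `β`, the positive choice among `±(g β)` -/
noncomputable def wabs (g : E ≃ₗ[ℝ] E) (β : E) : E :=
  if 0 < S.f (g β) then g β else -(g β)

lemma wabs_memIndP {g : E ≃ₗ[ℝ] E} (hg : S.IsGood g) {β : E} (hβ : β ∈ S.IndP) :
    S.wabs g β ∈ S.IndP := by
  have hβR := S.RpR (S.IndP_Rp hβ)
  have hgβ : g β ∈ S.R := hg.2.1 β hβR
  have hind := ((S.mem_IndP).1 hβ).2
  unfold wabs
  split
  · next h =>
      exact (S.mem_IndP).2 ⟨S.mem_Rp hgβ h, S.good_ind hg hind⟩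
  · next h =>
      have hne := S.hf _ hgβ
      refine (S.mem_IndP).2 ⟨S.mem_Rp (S.neg_mem hgβ) ?_, S.ind_neg (S.good_ind hg hind)⟩
      rw [map_neg]
      rcases lt_or_gt_of_ne hne with h1 | h1
      · linarith
      · exact absurd h1 h

lemma copair_wabs {g : E ≃ₗ[ℝ] E} (β x : E) :
    copair (g β) x = (if 0 < S.f (g β) then (1:ℝ) else -1) * copair (S.wabs g β) x := by
  unfold wabs
  split
  · rw [one_mul]
  · rw [copair_neg]; ring

lemma wabs_inv {g : E ≃ₗ[ℝ] E} (hg : S.IsGood g) {β : E} (hβ : β ∈ S.IndP) :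
    S.wabs g⁻¹ (S.wabs g β) = β := by
  have hfβ := S.Rpf (S.IndP_Rp hβ)
  unfold wabs
  split
  · next h =>
      rw [inv_apply_apply]
      rw [if_pos hfβ]
  · next h =>
      rw [map_neg, inv_apply_apply]
      rw [if_neg (by rw [map_neg]; linarith), neg_neg]

noncomputable def pifn (x : E) : ℝ := ∏ β ∈ S.IndP, copair β x

noncomputable def eps (w : weylGroup S.R) : ℝ :=
  ∏ β ∈ S.IndP, (if 0 < S.f (((w : E ≃ₗ[ℝ] E))⁻¹ β) then (1:ℝ) else -1)

lemma good_coe (w : weylGroup S.R) : S.IsGood (w : E ≃ₗ[ℝ] E) := S.good_mem w.2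

lemma eps_sq (w : weylGroup S.R) : S.eps w * S.eps w = 1 := by
  unfold eps
  rw [← Finset.prod_mul_distrib]
  apply Finset.prod_eq_one
  intro β _
  split <;> norm_num

lemma eps_ne_zero (w : weylGroup S.R) : S.eps w ≠ 0 := by
  intro h
  have := S.eps_sq w
  rw [h, mul_zero] at this
  norm_num at this

lemma eps_pi (w : weylGroup S.R) (x : E) :
    S.pifn ((w : E ≃ₗ[ℝ] E) x) = S.eps w * S.pifn x := by
  have hginv : S.IsGood ((w : E ≃ₗ[ℝ] E))⁻¹ := S.good_inv (S.good_coe w)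
  have step1 : S.pifn ((w : E ≃ₗ[ℝ] E) x) =
      ∏ β ∈ S.IndP, copair (((w : E ≃ₗ[ℝ] E))⁻¹ β) x := by
    unfold pifn
    refine Finset.prod_congr rfl fun β _ => ?_
    have h2 := S.good_copair hginv β ((w : E ≃ₗ[ℝ] E) x)
    rw [inv_apply_apply] at h2
    exact h2.symm
  rw [step1]
  have step2 : ∀ β ∈ S.IndP, copair (((w : E ≃ₗ[ℝ] E))⁻¹ β) x =
      (if 0 < S.f (((w : E ≃ₗ[ℝ] E))⁻¹ β) then (1:ℝ) else -1) *
        copair (S.wabs ((w : E ≃ₗ[ℝ] E))⁻¹ β) x := fun β _ => S.copair_wabs _ _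
  rw [Finset.prod_congr rfl step2, Finset.prod_mul_distrib]
  unfold eps
  congr 1
  unfold pifn
  apply Finset.prod_nbij' (fun β => S.wabs ((w : E ≃ₗ[ℝ] E))⁻¹ β)
    (fun β => S.wabs ((w : E ≃ₗ[ℝ] E)) β)
  · intro β hβ; exact S.wabs_memIndP hginv hβ
  · intro β hβ; exact S.wabs_memIndP (S.good_coe w) hβ
  · intro β hβ
    have := S.wabs_inv hginv (β := β) hβ
    rwa [inv_inv] at this
  · intro β hβ; exact S.wabs_inv (S.good_coe w) hβ
  · intro β hβ; rfl

lemma pifn_rho_pos : 0 < S.pifn S.rho :=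
  Finset.prod_pos fun β hβ => S.copair_rho_pos (S.IndP_Rp hβ)

lemma eps_mul (u v : weylGroup S.R) : S.eps (u * v) = S.eps u * S.eps v := by
  have h1 := S.eps_pi (u * v) S.rho
  have h2 : ((↑(u * v) : E ≃ₗ[ℝ] E)) S.rho = (u : E ≃ₗ[ℝ] E) ((v : E ≃ₗ[ℝ] E) S.rho) := by
    rw [Subgroup.coe_mul, LEapply_mul]
  rw [h2, S.eps_pi u, S.eps_pi v] at h1
  have h3 := S.pifn_rho_pos
  have h4 : S.pifn S.rho ≠ 0 := ne_of_gt h3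
  rw [← mul_assoc] at h1
  exact (mul_right_cancel₀ h4 h1).symm

lemma eps_one : S.eps 1 = 1 := by
  have h1 := S.eps_mul 1 1
  rw [mul_one] at h1
  have h2 := S.eps_sq 1
  rw [h2] at h1
  exact h1

lemma eps_inv (w : weylGroup S.R) : S.eps w⁻¹ = S.eps w := by
  have h1 := S.eps_mul w w⁻¹
  rw [mul_inv_cancel, S.eps_one] at h1
  have h2 := S.eps_sq w
  have h3 := S.eps_ne_zero w
  have h4 : S.eps w * S.eps w⁻¹ = S.eps w * S.eps w := by rw [← h1, h2]
  exact (mul_left_cancel₀ h3 h4.symm).symm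

lemma eps_simple {γ : E} (hγ : γ ∈ S.Delta) :
    S.eps ⟨rflE γ, S.rflE_mem (S.RpR (S.Delta_Rp hγ))⟩ = -1 := by
  have hγ0 := S.ne0 (S.RpR (S.Delta_Rp hγ))
  unfold eps
  rw [Finset.prod_eq_single γ]
  · rw [show ((⟨rflE γ, S.rflE_mem (S.RpR (S.Delta_Rp hγ))⟩ :
        weylGroup S.R) : E ≃ₗ[ℝ] E) = rflE γ from rfl]
    rw [rflE_inv hγ0, rflE_apply hγ0, reflRoot_self hγ0, map_neg]
    rw [if_neg (by have := S.Rpf (S.Delta_Rp hγ); linarith)]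
  · intro β hβ hne
    rw [show ((⟨rflE γ, S.rflE_mem (S.RpR (S.Delta_Rp hγ))⟩ :
        weylGroup S.R) : E ≃ₗ[ℝ] E) = rflE γ from rfl]
    rw [rflE_inv hγ0, rflE_apply hγ0]
    rw [if_pos (S.Rpf (S.IndP_Rp (S.simple_reflect_ind hγ hβ hne)))]
  · intro h
    exact absurd (S.Delta_ind hγ) h

lemma eps_reflection {β : E} (hβ : β ∈ S.IndP) :
    S.eps ⟨rflE β, S.rflE_mem (S.RpR (S.IndP_Rp hβ))⟩ = -1 := by
  obtain ⟨l, hlΔ, γ, hγ, he⟩ := S.exists_expr_ind _ β hβ le_rfl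
  have hwmem : sProd l ∈ weylGroup S.R := S.sProd_mem hlΔ
  have hgood := S.good_mem hwmem
  have hconj : rflE β = sProd l * rflE γ * (sProd l)⁻¹ := by
    rw [he]; exact S.conj_rflE hgood (S.RpR (S.Delta_Rp hγ))
  set sw : weylGroup S.R := ⟨sProd l, hwmem⟩ with hsw
  set sγ : weylGroup S.R := ⟨rflE γ, S.rflE_mem (S.RpR (S.Delta_Rp hγ))⟩ with hsγ
  have hel : (⟨rflE β, S.rflE_mem (S.RpR (S.IndP_Rp hβ))⟩ : weylGroup S.R)
      = sw * sγ * sw⁻¹ := by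
    apply Subtype.ext
    simp only [Subgroup.coe_mul, InvMemClass.coe_inv]
    exact hconj
  rw [hel, S.eps_mul, S.eps_mul, S.eps_inv, S.eps_simple hγ]
  have h2 := S.eps_sq sw
  nlinarith [h2]

lemma rflE_fix {β x : E} (hβ0 : β ≠ 0) (h : copair β x = 0) : rflE β x = x := by
  rw [rflE_apply hβ0]
  unfold reflRoot
  rw [h, zero_smul, sub_zero]

end RSys
end Dev7
section Dev8
variable {E : Type*} [NormedAddCommGroup E] [InnerProductSpace ℝ E] [DecidableEq E]
namespace RSys

open Finset Polynomial

lemma avoid (F : Finset E) (hF : ∀ v ∈ F, v ≠ (0:E)) :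
    ∃ z : E, ∀ v ∈ F, ⟪z, v⟫ ≠ 0 := by
  classical
  induction F using Finset.induction_on with
  | empty => exact ⟨0, by simp⟩
  | @insert v0 F hv0 ih =>
      have hF' : ∀ v ∈ F, v ≠ (0:E) := fun v h => hF v (Finset.mem_insert_of_mem h)
      obtain ⟨z, hz⟩ := ih hF'
      have hv00 : v0 ≠ 0 := hF v0 (Finset.mem_insert_self _ _)
      have hb := ine hv00
      set B : Finset ℝ := insert (-⟪z, v0⟫ / ⟪v0, v0⟫)
        (F.image (fun v => -⟪z, v⟫ / ⟪v0, v⟫)) with hB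
      obtain ⟨t, ht⟩ := Infinite.exists_notMem_finset B
      refine ⟨z + t • v0, ?_⟩
      intro v hv
      rw [inner_add_left, real_inner_smul_left]
      rcases Finset.mem_insert.1 hv with rfl | hvF
      · intro hc
        apply ht
        rw [hB]
        have he : t = -⟪z, v⟫ / ⟪v, v⟫ := by field_simp; linarith
        rw [he]
        exact Finset.mem_insert_self _ _
      · by_cases h0 : ⟪v0, v⟫ = 0
        · rw [h0, mul_zero, add_zero]; exact hz v hvF
        · intro hc
          apply ht
          rw [hB]
          have he : t = -⟪z, v⟫ / ⟪v0, v⟫ := by field_simp; linarith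
          rw [he]
          exact Finset.mem_insert_of_mem (Finset.mem_image_of_mem _ hvF)

variable (S : RSys E)

lemma indP_nonprop {β β' : E} (hβ : β ∈ S.IndP) (hβ' : β' ∈ S.IndP) (hne : β ≠ β') :
    ∀ c : ℝ, β' ≠ c • β := by
  intro c hc
  have hβR := S.RpR (S.IndP_Rp hβ)
  have hβ'R := S.RpR (S.IndP_Rp hβ')
  have hcpos : 0 < c := by
    have h1 := S.Rpf (S.IndP_Rp hβ)
    have h2 := S.Rpf (S.IndP_Rp hβ')
    have h3 : S.f β' = c * S.f β := by rw [hc, map_smul, smul_eq_mul]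
    nlinarith
  rcases S.ratio hβR hβ'R hc with h | h | h | h | h | h
  · rw [h, one_smul] at hc; exact hne hc.symm
  · linarith
  · apply ((S.mem_IndP).1 hβ').2
    rw [hc, h, smul_smul]
    norm_num
    exact hβR
  · linarith
  · apply ((S.mem_IndP).1 hβ).2
    rw [h] at hc
    rw [← hc]
    exact hβ'R
  · linarith

variable [Fintype (weylGroup S.R)]

noncomputable def gS (T : Finset E) (x : E) : ℝ :=
  ∑ w : weylGroup S.R, S.eps w * ∏ β ∈ T, copair β ((w : E ≃ₗ[ℝ] E) x)

lemma gS_transform (T : Finset E) (v : weylGroup S.R) (x : E) :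
    S.gS T ((v : E ≃ₗ[ℝ] E) x) = S.eps v * S.gS T x := by
  unfold gS
  rw [Finset.mul_sum]
  apply Fintype.sum_equiv (Equiv.mulRight v)
  intro w
  have happ : ((↑(w * v) : E ≃ₗ[ℝ] E)) x = (↑w : E ≃ₗ[ℝ] E) ((↑v : E ≃ₗ[ℝ] E) x) := by
    rw [Subgroup.coe_mul, LEapply_mul]
  show S.eps w * ∏ β ∈ T, copair β ((↑w : E ≃ₗ[ℝ] E) ((↑v : E ≃ₗ[ℝ] E) x)) =
    S.eps v * (S.eps (w * v) * ∏ β ∈ T, copair β ((↑(w * v) : E ≃ₗ[ℝ] E) x))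
  rw [happ, S.eps_mul]
  have h2 := S.eps_sq v
  set P := ∏ β ∈ T, copair β ((↑w : E ≃ₗ[ℝ] E) ((↑v : E ≃ₗ[ℝ] E) x))
  linear_combination (-(S.eps w * P)) * h2

lemma gS_vanish (T : Finset E) {β0 x : E} (hβ0 : β0 ∈ S.IndP) (hx : copair β0 x = 0) :
    S.gS T x = 0 := by
  have hβ00 := S.ne0 (S.RpR (S.IndP_Rp hβ0))
  set s : weylGroup S.R := ⟨rflE β0, S.rflE_mem (S.RpR (S.IndP_Rp hβ0))⟩ with hs
  have hfix : (s : E ≃ₗ[ℝ] E) x = x := by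
    rw [hs]
    exact rflE_fix hβ00 hx
  have htr := S.gS_transform T s x
  rw [hfix] at htr
  have heps : S.eps s = -1 := S.eps_reflection hβ0
  rw [heps] at htr
  linarith

noncomputable def gpoly (T : Finset E) (x z : E) : Polynomial ℝ :=
  ∑ w : weylGroup S.R, Polynomial.C (S.eps w) *
    ∏ β ∈ T, (Polynomial.C (copair β ((w : E ≃ₗ[ℝ] E) x)) +
      Polynomial.C (copair β ((w : E ≃ₗ[ℝ] E) z)) * Polynomial.X)

lemma gpoly_eval (T : Finset E) (x z : E) (s : ℝ) :
    (S.gpoly T x z).eval s = S.gS T (x + s • z) := by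
  unfold gpoly gS
  rw [Polynomial.eval_finset_sum]
  refine Finset.sum_congr rfl fun w _ => ?_
  rw [Polynomial.eval_mul, Polynomial.eval_C, Polynomial.eval_prod]
  congr 1
  refine Finset.prod_congr rfl fun β _ => ?_
  rw [Polynomial.eval_add, Polynomial.eval_C, Polynomial.eval_mul, Polynomial.eval_C,
    Polynomial.eval_X]
  conv_rhs => rw [map_add, map_smul, copair_add, copair_smul]
  ring

lemma gpoly_deg (T : Finset E) (x z : E) : (S.gpoly T x z).natDegree ≤ T.card := by
  unfold gpoly
  apply Polynomial.natDegree_sum_le_of_forall_le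
  intro w _
  apply le_trans (Polynomial.natDegree_C_mul_le _ _)
  apply le_trans (Polynomial.natDegree_prod_le _ _)
  have h1 : ∀ β ∈ T, (Polynomial.C (copair β ((w : E ≃ₗ[ℝ] E) x)) +
      Polynomial.C (copair β ((w : E ≃ₗ[ℝ] E) z)) * Polynomial.X).natDegree ≤ 1 := by
    intro β _
    apply le_trans (Polynomial.natDegree_add_le _ _)
    apply max_le
    · rw [Polynomial.natDegree_C]; omega
    · exact le_trans (Polynomial.natDegree_C_mul_le _ _) (le_of_eq Polynomial.natDegree_X)
  refine le_trans (Finset.sum_le_sum h1) ?_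
  rw [Finset.sum_const, smul_eq_mul, mul_one]

lemma gS_zero_of_generic (T : Finset E) (hcard : T.card < S.IndP.card)
    (z : E) (hz : ∀ β ∈ S.IndP, copair β z ≠ 0) (y : E)
    (hgen : ∀ β ∈ S.IndP, ∀ β' ∈ S.IndP, β ≠ β' →
      copair β y * copair β' z - copair β' y * copair β z ≠ 0) :
    S.gS T y = 0 := by
  classical
  set q := S.gpoly T y z with hq
  have hroot : ∀ β ∈ S.IndP, q.eval (- copair β y / copair β z) = 0 := by
    intro β hβ
    rw [hq, S.gpoly_eval]
    apply S.gS_vanish T hβ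
    rw [copair_add, copair_smul]
    have hb := hz β hβ
    field_simp [hb]
    ring
  have hinj : Set.InjOn (fun β => - copair β y / copair β z) S.IndP := by
    intro β h1 β' h2 he
    by_contra hne
    apply hgen β h1 β' h2 hne
    simp only at he
    have hb1 := hz β h1
    have hb2 := hz β' h2
    field_simp at he
    linarith
  have hq0 : q = 0 := by
    apply Polynomial.eq_zero_of_natDegree_lt_card_of_eval_eq_zero' q
      (S.IndP.image (fun β => - copair β y / copair β z))
    · intro i hi
      obtain ⟨β, hβ, rfl⟩ := Finset.mem_image.1 hi
      exact hroot β hβ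
    · rw [Finset.card_image_of_injOn hinj]
      exact lt_of_le_of_lt (S.gpoly_deg T y z) hcard
  have hv := S.gpoly_eval T y z 0
  rw [← hq, hq0, zero_smul, add_zero, Polynomial.eval_zero] at hv
  exact hv.symm

lemma gS_zero (T : Finset E) (hT : T ⊆ S.IndP) (hne : T ≠ S.IndP) (x : E) :
    S.gS T x = 0 := by
  classical
  have hcard : T.card < S.IndP.card :=
    Finset.card_lt_card (Finset.ssubset_iff_subset_ne.2 ⟨hT, hne⟩)
  obtain ⟨z, hz0⟩ := avoid S.IndP (fun v hv => S.ne0 (S.RpR (S.IndP_Rp hv)))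
  have hz : ∀ β ∈ S.IndP, copair β z ≠ 0 := by
    intro β hβ
    unfold copair
    exact div_ne_zero (mul_ne_zero two_ne_zero (hz0 β hβ))
      (ine (S.ne0 (S.RpR (S.IndP_Rp hβ))))
  set pairs := (S.IndP ×ˢ S.IndP).filter (fun p => p.1 ≠ p.2) with hpairs
  set vf : E × E → E := fun p => (copair p.2 z * (2 / ⟪p.1, p.1⟫)) • p.1 -
      (copair p.1 z * (2 / ⟪p.2, p.2⟫)) • p.2 with hvf
  have hvfinner : ∀ p : E × E, p.1 ∈ S.IndP → p.2 ∈ S.IndP → ∀ y : E,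
      ⟪y, vf p⟫ = copair p.1 y * copair p.2 z - copair p.2 y * copair p.1 z := by
    intro p h1 h2 y
    rw [hvf]
    simp only [inner_sub_right, real_inner_smul_right]
    unfold copair
    field_simp [ine (S.ne0 (S.RpR (S.IndP_Rp h1))), ine (S.ne0 (S.RpR (S.IndP_Rp h2)))]
  have hvfne : ∀ p ∈ pairs, vf p ≠ 0 := by
    intro p hp
    have hmem := Finset.mem_filter.1 hp
    have h1 := (Finset.mem_product.1 hmem.1).1
    have h2 := (Finset.mem_product.1 hmem.1).2
    have hne12 := hmem.2
    intro hc
    have hc1 : copair p.2 z * (2 / ⟪p.1, p.1⟫) ≠ 0 :=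
      mul_ne_zero (hz _ h2) (div_ne_zero two_ne_zero (ine (S.ne0 (S.RpR (S.IndP_Rp h1)))))
    rw [hvf] at hc
    have he := sub_eq_zero.1 hc
    have he2 : p.1 = ((copair p.2 z * (2 / ⟪p.1, p.1⟫))⁻¹ *
        (copair p.1 z * (2 / ⟪p.2, p.2⟫))) • p.2 := by
      rw [mul_smul, ← he, inv_smul_smul₀ hc1]
    exact S.indP_nonprop h2 h1 (Ne.symm hne12) _ he2
  obtain ⟨z2, hz2⟩ := avoid (pairs.image vf)
    (by
      intro v hv
      obtain ⟨p, hp, rfl⟩ := Finset.mem_image.1 hv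
      exact hvfne p hp)
  have hDz2 : ∀ p ∈ pairs,
      copair p.1 z2 * copair p.2 z - copair p.2 z2 * copair p.1 z ≠ 0 := by
    intro p hp
    have hmem := Finset.mem_filter.1 hp
    have h1 := (Finset.mem_product.1 hmem.1).1
    have h2 := (Finset.mem_product.1 hmem.1).2
    rw [← hvfinner p h1 h2 z2]
    exact hz2 _ (Finset.mem_image_of_mem _ hp)
  set bad : Finset ℝ := pairs.image (fun p =>
    - (copair p.1 x * copair p.2 z - copair p.2 x * copair p.1 z) /
      (copair p.1 z2 * copair p.2 z - copair p.2 z2 * copair p.1 z)) with hbad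
  have hgood : ∀ t : ℝ, t ∉ bad → S.gS T (x + t • z2) = 0 := by
    intro t ht
    apply S.gS_zero_of_generic T hcard z hz
    intro β h1 β' h2 hne
    have hp : (β, β') ∈ pairs :=
      Finset.mem_filter.2 ⟨Finset.mem_product.2 ⟨h1, h2⟩, hne⟩
    intro hc
    apply ht
    rw [hbad]
    have hlin : copair β (x + t • z2) * copair β' z - copair β' (x + t • z2) * copair β z
        = (copair β x * copair β' z - copair β' x * copair β z) +
          t * (copair β z2 * copair β' z - copair β' z2 * copair β z) := by
      rw [copair_add, copair_add, copair_smul, copair_smul]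
      ring
    rw [hlin] at hc
    have ht2 := hDz2 _ hp
    simp only at ht2
    have hteq : t = - (copair β x * copair β' z - copair β' x * copair β z) /
        (copair β z2 * copair β' z - copair β' z2 * copair β z) := by
      rw [eq_div_iff ht2]
      linarith
    rw [hteq]
    exact Finset.mem_image_of_mem _ hp
  have hq0 : S.gpoly T x z2 = 0 := by
    apply Polynomial.eq_zero_of_infinite_isRoot
    apply Set.Infinite.mono (s := (↑bad : Set ℝ)ᶜ)
    · intro t (ht : t ∉ (↑bad : Set ℝ))
      show (S.gpoly T x z2).IsRoot t
      show (S.gpoly T x z2).eval t = 0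
      rw [S.gpoly_eval]
      exact hgood t (fun hc => ht (Finset.mem_coe.2 hc))
    · exact Set.Finite.infinite_compl (Finset.finite_toSet bad)
  have hv := S.gpoly_eval T x z2 0
  rw [hq0, zero_smul, add_zero, Polynomial.eval_zero] at hv
  exact hv.symm

end RSys
end Dev8
section Dev9
variable {E : Type*} [NormedAddCommGroup E] [InnerProductSpace ℝ E] [DecidableEq E]
namespace RSys
variable (S : RSys E)

open Finset

variable [Fintype (weylGroup S.R)]

lemma Pw_zero (w : weylGroup S.R) (hne : w ≠ 1) :
    ∏ β ∈ S.IndP, (copair β ((w : E ≃ₗ[ℝ] E) S.rho) + S.cc β) = 0 := by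
  have hcoene : (w : E ≃ₗ[ℝ] E) ≠ 1 := by
    intro h
    exact hne (Subtype.ext h)
  obtain ⟨γ, hγ, hneg⟩ := S.neg_simple_of_ne_one w.2 hcoene
  have hγR := S.RpR (S.Delta_Rp hγ)
  have hwγR : (w : E ≃ₗ[ℝ] E) γ ∈ S.R := (S.good_coe w).2.1 γ hγR
  set β0 := -((w : E ≃ₗ[ℝ] E) γ) with hβ0
  have hβ0Rp : β0 ∈ S.Rp := S.mem_Rp (S.neg_mem hwγR) (by rw [hβ0, map_neg]; linarith)
  have hβ0ind : β0 ∈ S.IndP := (S.mem_IndP).2 ⟨hβ0Rp,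
    by rw [hβ0]; exact S.ind_neg (S.good_ind (S.good_coe w) ((S.mem_IndP).1 (S.Delta_ind hγ)).2)⟩
  apply Finset.prod_eq_zero hβ0ind
  have h1 : copair β0 ((w : E ≃ₗ[ℝ] E) S.rho) = - copair γ S.rho := by
    have h2 := S.good_copair (S.good_coe w) γ S.rho
    rw [hβ0, copair_neg, h2]
  have h3 : S.cc β0 = S.cc γ := by
    rw [hβ0, S.cc_neg, S.cc_w (S.good_coe w)]
  rw [h1, h3, S.copair_rho_simple hγ]
  ring

lemma main_count : (Fintype.card (weylGroup S.R) : ℝ) * S.pifn S.rho =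
    ∏ β ∈ S.IndP, (copair β S.rho + S.cc β) := by
  classical
  set N : ℝ := ∑ w : weylGroup S.R, S.eps w *
    ∏ β ∈ S.IndP, (copair β ((w : E ≃ₗ[ℝ] E) S.rho) + S.cc β) with hN
  have hN1 : N = ∏ β ∈ S.IndP, (copair β S.rho + S.cc β) := by
    rw [hN, Finset.sum_eq_single 1]
    · rw [S.eps_one, one_mul]
      have h1 : ((1 : weylGroup S.R) : E ≃ₗ[ℝ] E) S.rho = S.rho := rfl
      rw [h1]
    · intro w _ hne
      rw [S.Pw_zero w hne, mul_zero]
    · intro h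
      exact absurd (Finset.mem_univ _) h
  have hN2 : N = (Fintype.card (weylGroup S.R) : ℝ) * S.pifn S.rho := by
    have e1 : N = ∑ T ∈ S.IndP.powerset, ∑ w : weylGroup S.R,
        S.eps w * ((∏ β ∈ T, copair β ((w : E ≃ₗ[ℝ] E) S.rho)) * ∏ β ∈ S.IndP \ T, S.cc β) := by
      rw [hN]
      rw [show (∑ w : weylGroup S.R, S.eps w *
          ∏ β ∈ S.IndP, (copair β ((w : E ≃ₗ[ℝ] E) S.rho) + S.cc β))
        = ∑ w : weylGroup S.R, ∑ T ∈ S.IndP.powerset,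
            S.eps w * ((∏ β ∈ T, copair β ((w : E ≃ₗ[ℝ] E) S.rho)) *
              ∏ β ∈ S.IndP \ T, S.cc β) from
        Finset.sum_congr rfl fun w _ => by
          rw [Finset.prod_add, Finset.mul_sum]]
      exact Finset.sum_comm
    have e2 : ∀ T ∈ S.IndP.powerset, T ≠ S.IndP →
        (∑ w : weylGroup S.R, S.eps w * ((∏ β ∈ T, copair β ((w : E ≃ₗ[ℝ] E) S.rho)) *
          ∏ β ∈ S.IndP \ T, S.cc β)) = 0 := by
      intro T hT hne
      have h1 : ∀ w : weylGroup S.R,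
          S.eps w * ((∏ β ∈ T, copair β ((w : E ≃ₗ[ℝ] E) S.rho)) * ∏ β ∈ S.IndP \ T, S.cc β)
          = (S.eps w * ∏ β ∈ T, copair β ((w : E ≃ₗ[ℝ] E) S.rho)) * ∏ β ∈ S.IndP \ T, S.cc β :=
        fun w => by ring
      rw [Finset.sum_congr rfl (fun w _ => h1 w), ← Finset.sum_mul]
      have h2 := S.gS_zero T (Finset.mem_powerset.1 hT) hne S.rho
      unfold gS at h2
      rw [h2, zero_mul]
    have e3 : (∑ w : weylGroup S.R,
        S.eps w * ((∏ β ∈ S.IndP, copair β ((w : E ≃ₗ[ℝ] E) S.rho)) *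
          ∏ β ∈ S.IndP \ S.IndP, S.cc β))
        = (Fintype.card (weylGroup S.R) : ℝ) * S.pifn S.rho := by
      have h3 : ∀ w : weylGroup S.R,
          S.eps w * ((∏ β ∈ S.IndP, copair β ((w : E ≃ₗ[ℝ] E) S.rho)) *
            ∏ β ∈ S.IndP \ S.IndP, S.cc β) = S.pifn S.rho := by
        intro w
        rw [Finset.sdiff_self, Finset.prod_empty, mul_one]
        rw [show (∏ β ∈ S.IndP, copair β ((w : E ≃ₗ[ℝ] E) S.rho))
          = S.pifn ((w : E ≃ₗ[ℝ] E) S.rho) from rfl]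
        rw [S.eps_pi w S.rho, ← mul_assoc, S.eps_sq w, one_mul]
      rw [Finset.sum_congr rfl (fun w _ => h3 w), Finset.sum_const, Finset.card_univ,
        nsmul_eq_mul]
    rw [e1, Finset.sum_eq_single S.IndP e2
      (fun h => absurd (Finset.mem_powerset_self _) h)]
    exact e3
  rw [← hN2, hN1]

lemma card_eq : (Fintype.card (weylGroup S.R) : ℝ) =
    ∏ β ∈ S.IndP, (copair β S.rho + S.cc β) / (copair β S.rho) := by
  rw [Finset.prod_div_distrib, ← S.main_count]
  have h := S.pifn_rho_pos
  have h2 : (∏ β ∈ S.IndP, copair β S.rho) = S.pifn S.rho := rfl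
  rw [h2, mul_div_assoc, div_self (ne_of_gt h), mul_one]

end RSys
end Dev9
section Dev10
variable {E : Type*} [NormedAddCommGroup E] [InnerProductSpace ℝ E] [DecidableEq E]
namespace RSys
variable (S : RSys E)

open Finset

lemma rhs_match :
    (∏ α ∈ S.Rp, (copair α S.rho + 1 + 2⁻¹ * (if (2⁻¹ : ℝ) • α ∈ S.R then (1:ℝ) else 0)) /
      (copair α S.rho + 2⁻¹ * (if (2⁻¹ : ℝ) • α ∈ S.R then (1:ℝ) else 0))) =
    ∏ β ∈ S.IndP, (copair β S.rho + S.cc β) / (copair β S.rho) := by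
  classical
  set F : E → ℝ := fun α =>
    (copair α S.rho + 1 + 2⁻¹ * (if (2⁻¹ : ℝ) • α ∈ S.R then (1:ℝ) else 0)) /
      (copair α S.rho + 2⁻¹ * (if (2⁻¹ : ℝ) • α ∈ S.R then (1:ℝ) else 0)) with hF
  set DD := S.Rp.filter (fun α => (2⁻¹ : ℝ) • α ∈ S.R) with hDD
  set D := S.IndP.filter (fun β => (2 : ℝ) • β ∈ S.R) with hD
  set Dc := S.IndP.filter (fun β => ¬ ((2 : ℝ) • β ∈ S.R)) with hDc
  have hindf : S.Rp.filter (fun α => ¬ ((2⁻¹ : ℝ) • α ∈ S.R)) = S.IndP := by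
    apply Finset.ext
    intro α
    rw [Finset.mem_filter, mem_IndP]
  -- step 1 : split over Rp
  have step1 : ∏ α ∈ S.Rp, F α = (∏ α ∈ DD, F α) * ∏ β ∈ S.IndP, F β := by
    rw [← hindf, hDD]
    exact (Finset.prod_filter_mul_prod_filter_not S.Rp _ F).symm
  -- step 2 : on IndP, F is (h+1)/h
  have step2 : ∏ β ∈ S.IndP, F β = ∏ β ∈ S.IndP, (copair β S.rho + 1) / (copair β S.rho) := by
    refine Finset.prod_congr rfl fun β hβ => ?_
    rw [hF]
    simp only
    rw [if_neg ((S.mem_IndP).1 hβ).2]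
    norm_num
  -- step 3 : reindex DD to D
  have step3 : ∏ α ∈ DD, F α = ∏ β ∈ D, (copair β S.rho + 3) / (copair β S.rho + 1) := by
    apply Finset.prod_nbij' (fun α => (2⁻¹ : ℝ) • α) (fun β => (2 : ℝ) • β)
    · intro α hα
      have h1 := Finset.mem_filter.1 hα
      have hhalf : (2⁻¹ : ℝ) • α ∈ S.IndP := S.half_mem_IndP h1.1 h1.2
      refine Finset.mem_filter.2 ⟨hhalf, ?_⟩
      rw [smul_smul]
      norm_num
      exact S.RpR h1.1
    · intro β hβ
      have h1 := Finset.mem_filter.1 hβ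
      refine Finset.mem_filter.2 ⟨S.two_smul_mem_Rp (S.IndP_Rp h1.1) h1.2, ?_⟩
      rw [smul_smul]
      norm_num
      exact S.RpR (S.IndP_Rp h1.1)
    · intro α _; rw [smul_smul]; norm_num
    · intro β _; rw [smul_smul]; norm_num
    · intro α hα
      have h1 := Finset.mem_filter.1 hα
      have hhalfRp : (2⁻¹ : ℝ) • α ∈ S.Rp := S.IndP_Rp (S.half_mem_IndP h1.1 h1.2)
      have hh : 0 < copair ((2⁻¹ : ℝ) • α) S.rho := S.copair_rho_pos hhalfRp
      have hcop : copair α S.rho = copair ((2⁻¹ : ℝ) • α) S.rho / 2 := by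
        conv_lhs => rw [show α = (2 : ℝ) • ((2⁻¹ : ℝ) • α) by rw [smul_smul]; norm_num]
        rw [copair_smul_root (2 : ℝ) two_ne_zero]
      rw [hF]
      simp only
      rw [if_pos h1.2, hcop]
      have hne1 : copair ((2⁻¹ : ℝ) • α) S.rho + 1 ≠ 0 := by linarith
      field_simp
      ring
  -- step 4 : split IndP products over D / Dc
  have step4 : ∀ G : E → ℝ, ∏ β ∈ S.IndP, G β = (∏ β ∈ D, G β) * ∏ β ∈ Dc, G β := by
    intro G
    rw [hD, hDc]
    exact (Finset.prod_filter_mul_prod_filter_not S.IndP _ G).symm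
  have hccD : ∀ β ∈ D, S.cc β = 3 := by
    intro β hβ
    unfold cc
    rw [if_pos (Finset.mem_filter.1 hβ).2]
  have hccDc : ∀ β ∈ Dc, S.cc β = 1 := by
    intro β hβ
    unfold cc
    rw [if_neg (Finset.mem_filter.1 hβ).2]
  have hposD : ∀ β ∈ S.IndP, 0 < copair β S.rho := fun β hβ =>
    S.copair_rho_pos (S.IndP_Rp hβ)
  -- assemble
  rw [step1, step2, step3, step4 (fun β => (copair β S.rho + 1) / copair β S.rho),
    step4 (fun β => (copair β S.rho + S.cc β) / copair β S.rho)]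
  have merge : (∏ β ∈ D, (copair β S.rho + 3) / (copair β S.rho + 1)) *
      ((∏ β ∈ D, (copair β S.rho + 1) / copair β S.rho) * ∏ β ∈ Dc, (copair β S.rho + 1) / copair β S.rho)
      = ((∏ β ∈ D, (copair β S.rho + 3) / copair β S.rho) *
        ∏ β ∈ Dc, (copair β S.rho + 1) / copair β S.rho) := by
    rw [← mul_assoc, ← Finset.prod_mul_distrib]
    congr 1
    refine Finset.prod_congr rfl fun β hβ => ?_
    have hp := hposD β (Finset.mem_filter.1 hβ).1
    have h1 : copair β S.rho + 1 ≠ 0 := by linarith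
    have h0 : copair β S.rho ≠ 0 := ne_of_gt hp
    field_simp
  rw [merge]
  congr 1
  · exact Finset.prod_congr rfl fun β hβ => by rw [hccD β hβ]
  · exact Finset.prod_congr rfl fun β hβ => by rw [hccDc β hβ]

end RSys
end Dev10

/-- **The order of the Weyl group**:
`|W| = ∏_{α∈R⁺} (⟨ρ,α∨⟩ + 1 + δ_{α/2}/2)/(⟨ρ,α∨⟩ + δ_{α/2}/2)`,
where `δ_{α/2} = 1` if `α/2 ∈ R` and `0` otherwise (`R` may be nonreduced). -/
theorem weyl_group_order
    [DecidableEq E] (R Rp : Finset E) [Fintype (weylGroup R)]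
    (h0 : (0 : E) ∉ R)
    (hspan : Submodule.span ℝ (R : Set E) = ⊤)
    (hcrys : ∀ α ∈ R, ∀ β ∈ R, ∃ z : ℤ, copair α β = (z : ℝ))
    (hrc : ∀ α ∈ R, ∀ β ∈ R, reflRoot α β ∈ R)
    (hirr : ∀ R1 R2 : Finset E, Disjoint R1 R2 → R1 ∪ R2 = R →
      R1.Nonempty → R2.Nonempty → (∀ α ∈ R1, ∀ β ∈ R2, ⟪α, β⟫ = 0) → False)
    (f : E →ₗ[ℝ] ℝ) (hf : ∀ α ∈ R, f α ≠ 0)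
    (hRp : ∀ α, α ∈ Rp ↔ α ∈ R ∧ 0 < f α)
    (ρ : E) (hρ : ρ = (2⁻¹ : ℝ) • ∑ α ∈ Rp, α) :
    (Fintype.card (weylGroup R) : ℝ) =
      ∏ α ∈ Rp,
        (copair α ρ + 1 + 2⁻¹ * (if (2⁻¹ : ℝ) • α ∈ R then (1 : ℝ) else 0)) /
          (copair α ρ + 2⁻¹ * (if (2⁻¹ : ℝ) • α ∈ R then (1 : ℝ) else 0)) := by
  classical
  set S : RSys E := ⟨R, Rp, f, h0, hcrys, hrc, hf, hRp⟩ with hS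
  letI hFin : Fintype (weylGroup S.R) := ‹Fintype (weylGroup R)›
  have hρ2 : ρ = S.rho := hρ
  have h1 := S.card_eq
  have h2 := S.rhs_match
  rw [hρ2]
  exact h1.trans h2.symm
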